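/- arXiv:1710.00520 — 7 statements merged into one kernel-verified Lean document; each statement's English description precedes it below -/
import Mathlib

section
/- Let C be a cone in a real vector space and f : C × C → ℝ a symmetric function that is bilinear with respect to nonnegative linear combinations (i.e., f(λ₁u₁ + λ₂u₂, μ₁v₁ + μ₂v₂) = Σᵢⱼ λᵢμⱼ f(uᵢ, vⱼ) for all λᵢ, μᵢ ≥ 0 and uᵢ, vᵢ ∈ C) and which satisfies the Alexandrov–Fenchel type relation f(u,v)² ≥ f(u,u)·f(v,v) for all u, v ∈ C. Then for any r ≥ 1 and any u₀, u₁, …, u_r ∈ C, setting d_{ij} = f(uᵢ, uⱼ), the r × r matrix with (i,j) entry d_{0i}d_{0j} − d_{00}d_{ij} (for 1 ≤ i, j ≤ r) is positive semidefinite. -/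
/-!
Write `λ = λ⁺ - λ⁻` and put `p = ∑ λᵢ⁺ uᵢ`, `n = ∑ λᵢ⁻ uᵢ`, both in `C`. The quadratic form is
then `f(u₀, p - n)² - f(u₀, u₀) f(p - n, p - n)`, expanded bilinearly, so it suffices to prove this
reverse Cauchy–Schwarz inequality for `p, n ∈ C`. Shifting `p` and `n` by nonnegative multiples
of `u₀` changes `p - n` only by a multiple of `u₀` and lets us assume `f(u₀, p) = f(u₀, n)`.
In that case apply the Alexandrov–Fenchel relation to `p + s u₀` and `n + s u₀`: it is a
quadratic inequality in `s ≥ 0`, and its leading coefficient is `-f(u₀, u₀) f(p - n, p - n)`,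
which therefore must be nonnegative.
-/

open Finset Matrix

theorem nonneg_of_forall_nonneg_quadratic {a b c : ℝ}
    (h : ∀ s : ℝ, 0 ≤ s → 0 ≤ a * s ^ 2 + b * s + c) : 0 ≤ a := by
  by_contra! ha
  -- at this `s ≥ 1`: `a s² + b s + c ≤ s (a s + |b| + |c|) = a s < 0`
  set s := (|b| + |c|) / -a + 1 with hs_def
  have hs : 1 ≤ s := by
    have : 0 ≤ (|b| + |c|) / -a := div_nonneg (by positivity) (by linarith)
    linarith
  have has : a * s = a - (|b| + |c|) := by rw [hs_def]; field_simp [ha.ne]; ring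
  nlinarith [h s (by linarith), le_abs_self b, le_abs_self c, abs_nonneg c]

theorem sum_sum_mul_mul_sub_eq {ι : Type*} [Fintype ι] (c a : ι → ℝ) (d : ℝ)
    (D : Matrix ι ι ℝ) :
    ∑ i, ∑ j, c i * c j * (a i * a j - d * D i j) = (c ⬝ᵥ a) ^ 2 - d * (c ⬝ᵥ D *ᵥ c) := by
  rw [sq, dotProduct, sum_mul_sum]
  simp only [dotProduct, mulVec, mul_sum, ← sum_sub_distrib]
  refine sum_congr rfl fun i _ ↦ sum_congr rfl fun j _ ↦ ?_
  ring

section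

variable {V : Type*} [AddCommGroup V] [Module ℝ V]

theorem sum_smul_mem {C : Set V} (hC_add : ∀ u ∈ C, ∀ v ∈ C, u + v ∈ C)
    (hC_smul : ∀ (a : ℝ), 0 ≤ a → ∀ u ∈ C, a • u ∈ C) (h₀ : (0 : V) ∈ C)
    {ι : Type*} (s : Finset ι) {c : ι → ℝ} (hc : ∀ i, 0 ≤ c i) {v : ι → V} (hv : ∀ i, v i ∈ C) :
    ∑ i ∈ s, c i • v i ∈ C := by
  classical
  induction s using Finset.induction_on with
  | empty => simpa using h₀
  | insert i s hi ih => rw [sum_insert hi]; exact hC_add _ (hC_smul _ (hc i) _ (hv i)) _ ih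

def IsConeBilinear (C : Set V) (f : V → V → ℝ) : Prop :=
  ∀ (a₁ a₂ b₁ b₂ : ℝ), 0 ≤ a₁ → 0 ≤ a₂ → 0 ≤ b₁ → 0 ≤ b₂ →
    ∀ u₁ ∈ C, ∀ u₂ ∈ C, ∀ v₁ ∈ C, ∀ v₂ ∈ C,
      f (a₁ • u₁ + a₂ • u₂) (b₁ • v₁ + b₂ • v₂) =
        a₁ * b₁ * f u₁ v₁ + a₁ * b₂ * f u₁ v₂ + a₂ * b₁ * f u₂ v₁ + a₂ * b₂ * f u₂ v₂

namespace IsConeBilinear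

variable {C : Set V} {f : V → V → ℝ}

theorem flip (hf : IsConeBilinear C f) : IsConeBilinear C (flip f) := by
  intro a₁ a₂ b₁ b₂ ha₁ ha₂ hb₁ hb₂ u₁ hu₁ u₂ hu₂ v₁ hv₁ v₂ hv₂
  simp only [_root_.flip, hf b₁ b₂ a₁ a₂ hb₁ hb₂ ha₁ ha₂ v₁ hv₁ v₂ hv₂ u₁ hu₁ u₂ hu₂]
  ring

theorem apply_smul_add_smul_left (hf : IsConeBilinear C f) {a b : ℝ} (ha : 0 ≤ a) (hb : 0 ≤ b)
    {u v w : V} (hu : u ∈ C) (hv : v ∈ C) (hw : w ∈ C) :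
    f (a • u + b • v) w = a * f u w + b * f v w := by
  simpa using hf a b 1 0 ha hb zero_le_one le_rfl u hu v hv w hw w hw

theorem apply_add_smul_add_smul (hf : IsConeBilinear C f) {s t : ℝ} (hs : 0 ≤ s) (ht : 0 ≤ t)
    {x y u : V} (hx : x ∈ C) (hy : y ∈ C) (hu : u ∈ C) :
    f (x + s • u) (y + t • u) = f x y + t * f x u + s * f u y + s * t * f u u := by
  simpa using hf 1 s 1 t zero_le_one hs zero_le_one ht x hx u hu y hy u hu

theorem apply_add_smul_right (hf : IsConeBilinear C f) {t : ℝ} (ht : 0 ≤ t) {w y u : V}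
    (hw : w ∈ C) (hy : y ∈ C) (hu : u ∈ C) :
    f w (y + t • u) = f w y + t * f w u := by
  simpa using hf 1 0 1 t zero_le_one le_rfl zero_le_one ht w hw w hw y hy u hu

theorem apply_sum_smul_left (hf : IsConeBilinear C f) (hC_add : ∀ u ∈ C, ∀ v ∈ C, u + v ∈ C)
    (hC_smul : ∀ (a : ℝ), 0 ≤ a → ∀ u ∈ C, a • u ∈ C)
    {ι : Type*} (s : Finset ι) {c : ι → ℝ} (hc : ∀ i, 0 ≤ c i) {v : ι → V} (hv : ∀ i, v i ∈ C)
    {w : V} (hw : w ∈ C) :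
    f (∑ i ∈ s, c i • v i) w = ∑ i ∈ s, c i * f (v i) w := by
  classical
  have h₀ : (0 : V) ∈ C := by simpa using hC_smul 0 le_rfl w hw
  induction s using Finset.induction_on with
  | empty => simpa using hf.apply_smul_add_smul_left le_rfl le_rfl hw hw hw
  | insert i s hi ih =>
    have hsplit := hf.apply_smul_add_smul_left (hc i) zero_le_one (hv i)
      (sum_smul_mem hC_add hC_smul h₀ s hc hv) hw
    rw [one_smul, one_mul] at hsplit
    rw [sum_insert hi, sum_insert hi, hsplit, ih]

theorem apply_sum_smul_right (hf : IsConeBilinear C f) (hC_add : ∀ u ∈ C, ∀ v ∈ C, u + v ∈ C)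
    (hC_smul : ∀ (a : ℝ), 0 ≤ a → ∀ u ∈ C, a • u ∈ C)
    {ι : Type*} [Fintype ι] {c : ι → ℝ} (hc : ∀ i, 0 ≤ c i) {v : ι → V} (hv : ∀ i, v i ∈ C)
    {w : V} (hw : w ∈ C) :
    f w (∑ i, c i • v i) = c ⬝ᵥ fun i ↦ f w (v i) :=
  hf.flip.apply_sum_smul_left hC_add hC_smul univ hc hv hw

theorem apply_sum_smul_sum_smul (hf : IsConeBilinear C f)
    (hC_add : ∀ u ∈ C, ∀ v ∈ C, u + v ∈ C) (hC_smul : ∀ (a : ℝ), 0 ≤ a → ∀ u ∈ C, a • u ∈ C)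
    (h₀ : (0 : V) ∈ C) {ι : Type*} [Fintype ι] {c c' : ι → ℝ} (hc : ∀ i, 0 ≤ c i)
    (hc' : ∀ i, 0 ≤ c' i) {v : ι → V} (hv : ∀ i, v i ∈ C) :
    f (∑ i, c i • v i) (∑ j, c' j • v j) = c ⬝ᵥ (of (fun i j ↦ f (v i) (v j)) *ᵥ c') := by
  rw [hf.apply_sum_smul_left hC_add hC_smul _ hc hv (sum_smul_mem hC_add hC_smul h₀ _ hc' hv)]
  simp only [hf.apply_sum_smul_right hC_add hC_smul hc' hv (hv _), dotProduct, mulVec, of_apply]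
  simp_rw [mul_comm (c' _)]

theorem mul_apply_sub_nonpos_of_apply_eq (hf : IsConeBilinear C f)
    (hC_add : ∀ u ∈ C, ∀ v ∈ C, u + v ∈ C) (hC_smul : ∀ (a : ℝ), 0 ≤ a → ∀ u ∈ C, a • u ∈ C)
    (hsymm : ∀ u ∈ C, ∀ v ∈ C, f u v = f v u)
    (hAF : ∀ u ∈ C, ∀ v ∈ C, f u u * f v v ≤ (f u v) ^ 2)
    {u x y : V} (hu : u ∈ C) (hx : x ∈ C) (hy : y ∈ C) (hxy : f u x = f u y) :
    f u u * (f x x - f x y - f y x + f y y) ≤ 0 := by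
  rw [hsymm y hy x hx]
  set E := f x x - f x y - f x y + f y y
  suffices 0 ≤ -(f u u * E) by linarith
  refine nonneg_of_forall_nonneg_quadratic (b := -2 * f u x * E)
    (c := f x y ^ 2 - f x x * f y y) fun s hs ↦ ?_
  have hAF_s := hAF _ (hC_add x hx _ (hC_smul s hs u hu)) _ (hC_add y hy _ (hC_smul s hs u hu))
  rw [hf.apply_add_smul_add_smul hs hs hx hx hu, hf.apply_add_smul_add_smul hs hs hy hy hu,
    hf.apply_add_smul_add_smul hs hs hx hy hu, hsymm x hx u hu, hsymm y hy u hu, ← hxy] at hAF_s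
  linear_combination hAF_s

theorem mul_apply_sub_le_sq (hf : IsConeBilinear C f)
    (hC_add : ∀ u ∈ C, ∀ v ∈ C, u + v ∈ C) (hC_smul : ∀ (a : ℝ), 0 ≤ a → ∀ u ∈ C, a • u ∈ C)
    (hsymm : ∀ u ∈ C, ∀ v ∈ C, f u v = f v u)
    (hAF : ∀ u ∈ C, ∀ v ∈ C, f u u * f v v ≤ (f u v) ^ 2)
    {u p n : V} (hu : u ∈ C) (hp : p ∈ C) (hn : n ∈ C) :
    f u u * (f p p - f p n - f n p + f n n) ≤ (f u p - f u n) ^ 2 := by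
  rcases eq_or_ne (f u u) 0 with hd | hd
  · rw [hd, zero_mul]; positivity
  set c := (f u n - f u p) / f u u
  have hc : (c⁺ - c⁻) * f u u = f u n - f u p := by rw [posPart_sub_negPart, div_mul_cancel₀ _ hd]
  have hx := hC_add p hp _ (hC_smul _ (posPart_nonneg c) u hu)
  have hy := hC_add n hn _ (hC_smul _ (negPart_nonneg c) u hu)
  have key := mul_apply_sub_nonpos_of_apply_eq hf hC_add hC_smul hsymm hAF hu hx hy (by
    rw [hf.apply_add_smul_right (posPart_nonneg c) hu hp hu,
      hf.apply_add_smul_right (negPart_nonneg c) hu hn hu]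
    linear_combination hc)
  rw [hf.apply_add_smul_add_smul (posPart_nonneg c) (posPart_nonneg c) hp hp hu,
    hf.apply_add_smul_add_smul (posPart_nonneg c) (negPart_nonneg c) hp hn hu,
    hf.apply_add_smul_add_smul (negPart_nonneg c) (posPart_nonneg c) hn hp hu,
    hf.apply_add_smul_add_smul (negPart_nonneg c) (negPart_nonneg c) hn hn hu,
    hsymm p hp u hu, hsymm n hn u hu] at key
  linear_combination key - (f u p - f u n + (c⁺ - c⁻) * f u u) * hc

end IsConeBilinear

end

theorem af_determinantal_psd_general {V : Type*} [AddCommGroup V] [Module ℝ V] (C : Set V)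
    (hC_add : ∀ u ∈ C, ∀ v ∈ C, u + v ∈ C)
    (hC_smul : ∀ (a : ℝ), 0 ≤ a → ∀ u ∈ C, a • u ∈ C)
    (f : V → V → ℝ)
    (hsymm : ∀ u ∈ C, ∀ v ∈ C, f u v = f v u)
    (hbilin : ∀ (a₁ a₂ b₁ b₂ : ℝ), 0 ≤ a₁ → 0 ≤ a₂ → 0 ≤ b₁ → 0 ≤ b₂ →
      ∀ u₁ ∈ C, ∀ u₂ ∈ C, ∀ v₁ ∈ C, ∀ v₂ ∈ C,
        f (a₁ • u₁ + a₂ • u₂) (b₁ • v₁ + b₂ • v₂) =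
          a₁ * b₁ * f u₁ v₁ + a₁ * b₂ * f u₁ v₂ + a₂ * b₁ * f u₂ v₁ + a₂ * b₂ * f u₂ v₂)
    (hAF : ∀ u ∈ C, ∀ v ∈ C, f u u * f v v ≤ (f u v) ^ 2)
    (r : ℕ) (u : Fin (r + 1) → V) (hu : ∀ i, u i ∈ C)
    (lam : Fin r → ℝ) :
    0 ≤ ∑ i : Fin r, ∑ j : Fin r, lam i * lam j *
      (f (u 0) (u i.succ) * f (u 0) (u j.succ) - f (u 0) (u 0) * f (u i.succ) (u j.succ)) := by
  have hf : IsConeBilinear C f := hbilin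
  have h₀ : (0 : V) ∈ C := by simpa using hC_smul 0 le_rfl _ (hu 0)
  have hg : ∀ i : Fin r, u i.succ ∈ C := fun i ↦ hu i.succ
  have hpos : ∀ i, 0 ≤ lam⁺ i := posPart_nonneg lam
  have hneg : ∀ i, 0 ≤ lam⁻ i := negPart_nonneg lam
  have hcore := hf.mul_apply_sub_le_sq hC_add hC_smul hsymm hAF (hu 0)
    (sum_smul_mem hC_add hC_smul h₀ univ hpos hg) (sum_smul_mem hC_add hC_smul h₀ univ hneg hg)
  rw [hf.apply_sum_smul_right hC_add hC_smul hpos hg (hu 0),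
    hf.apply_sum_smul_right hC_add hC_smul hneg hg (hu 0),
    hf.apply_sum_smul_sum_smul hC_add hC_smul h₀ hpos hpos hg,
    hf.apply_sum_smul_sum_smul hC_add hC_smul h₀ hpos hneg hg,
    hf.apply_sum_smul_sum_smul hC_add hC_smul h₀ hneg hpos hg,
    hf.apply_sum_smul_sum_smul hC_add hC_smul h₀ hneg hneg hg] at hcore
  set a : Fin r → ℝ := fun i ↦ f (u 0) (u i.succ)
  set D : Matrix (Fin r) (Fin r) ℝ := of fun i j ↦ f (u i.succ) (u j.succ)
  calc 0 ≤ (lam ⬝ᵥ a) ^ 2 - f (u 0) (u 0) * (lam ⬝ᵥ D *ᵥ lam) := by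
        rw [← posPart_sub_negPart lam]
        simp only [sub_dotProduct, dotProduct_sub, mulVec_sub]
        linarith
    _ = _ := (sum_sum_mul_mul_sub_eq lam a _ D).symm

/-- For a symmetric, nonnegatively-bilinear function `f` on a convex cone `C`
satisfying the Alexandrov–Fenchel type relation `f(u,v)² ≥ f(u,u)f(v,v)`, the `r × r` matrix
with entries `d₀ᵢd₀ⱼ − d₀₀dᵢⱼ` (where `dᵢⱼ = f(uᵢ,uⱼ)`) is positive semidefinite. -/
theorem af_determinantal_psd {V : Type*} [AddCommGroup V] [Module ℝ V] (C : Set V)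
    (hC_add : ∀ u ∈ C, ∀ v ∈ C, u + v ∈ C)
    (hC_smul : ∀ (a : ℝ), 0 ≤ a → ∀ u ∈ C, a • u ∈ C)
    (f : V → V → ℝ)
    (hsymm : ∀ u ∈ C, ∀ v ∈ C, f u v = f v u)
    (hbilin : ∀ (a₁ a₂ b₁ b₂ : ℝ), 0 ≤ a₁ → 0 ≤ a₂ → 0 ≤ b₁ → 0 ≤ b₂ →
      ∀ u₁ ∈ C, ∀ u₂ ∈ C, ∀ v₁ ∈ C, ∀ v₂ ∈ C,
        f (a₁ • u₁ + a₂ • u₂) (b₁ • v₁ + b₂ • v₂) =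
          a₁ * b₁ * f u₁ v₁ + a₁ * b₂ * f u₁ v₂ + a₂ * b₁ * f u₂ v₁ + a₂ * b₂ * f u₂ v₂)
    (hAF : ∀ u ∈ C, ∀ v ∈ C, f u u * f v v ≤ (f u v) ^ 2)
    (r : ℕ) (hr : 1 ≤ r) (u : Fin (r + 1) → V) (hu : ∀ i, u i ∈ C)
    (lam : Fin r → ℝ) :
    0 ≤ ∑ i : Fin r, ∑ j : Fin r, lam i * lam j *
      (f (u 0) (u i.succ) * f (u 0) (u j.succ) - f (u 0) (u 0) * f (u i.succ) (u j.succ)) :=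
  af_determinantal_psd_general C hC_add hC_smul f hsymm hbilin hAF r u hu lam
end

section
/- Let C be a convex cone in a real vector space and f : C × C → ℝ a symmetric, nonnegatively bilinear function satisfying f(u,v)² ≥ f(u,u)f(v,v) for all u, v ∈ C. Then for any r ≥ 1 and any u₀, …, u_r ∈ C with d_{ij} = f(uᵢ, uⱼ), one has (−1)^r · d_{00}^{r−1} · det((d_{ij})_{0 ≤ i,j ≤ r}) ≥ 0. -/
/-!
Pulling `f` back along `x ↦ ∑ xᵢ uᵢ` turns the Gram matrix `D = (dᵢⱼ)` into a symmetric form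
`Q(x, y) = xᵀ D y` satisfying `Q(x, x) Q(y, y) ≤ Q(x, y)²` on the nonnegative orthant. Writing an
arbitrary `z` as `z⁺ - z⁻` and expanding this inequality at `e₀ + s z⁺`, `e₀ + s z⁻` to second order
in `s → 0⁺` gives `d₀₀ Q(z, z) ≤ Q(e₀, z)²` for every `z`. On vectors with `z₀ = 0` this says that
minus the Chiò condensation `E = (d₀₀ dᵢⱼ - dᵢ₀ d₀ⱼ)_{i,j ≥ 1}` is positive semidefinite, so
`(-1)^r det E ≥ 0`, and `d₀₀^(r-1) det D = det E` when `d₀₀ ≠ 0`.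
-/

open Filter Topology

namespace LinearMap.BilinForm

variable {V : Type*} [AddCommGroup V] [Module ℝ V]

def ReverseCauchySchwarzOn (B : LinearMap.BilinForm ℝ V) (K : Set V) : Prop :=
  ∀ x ∈ K, ∀ y ∈ K, B x x * B y y ≤ B x y ^ 2

theorem ReverseCauchySchwarzOn.mul_le_sq_sub {B : LinearMap.BilinForm ℝ V} (hB : B.IsSymm)
    {K : ConvexCone ℝ V} (hK : B.ReverseCauchySchwarzOn K) {x p q : V}
    (hx : x ∈ K) (hp : p ∈ K) (hq : q ∈ K) :
    B x x * B (p - q) (p - q) ≤ B x (p - q) ^ 2 := by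
  set c := B x (p - q) ^ 2 - B x x * B (p - q) (p - q)
  set b := 2 * (B x p * B p q + B x q * B p q - B x p * B q q - B x q * B p p)
  set a := B p q ^ 2 - B p p * B q q
  have hpoly (s : ℝ) (hs : 0 < s) : 0 ≤ c + b * s + a * s ^ 2 := by
    have h := hK _ (K.add_mem hx (K.smul_mem hs hp)) _ (K.add_mem hx (K.smul_mem hs hq))
    have hdefect : s ^ 2 * (c + b * s + a * s ^ 2) = B (x + s • p) (x + s • q) ^ 2 -
        B (x + s • p) (x + s • p) * B (x + s • q) (x + s • q) := by
      simp only [c, b, a, map_add, map_sub, map_smul, LinearMap.add_apply, LinearMap.sub_apply,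
        LinearMap.smul_apply, smul_eq_mul, hB.eq p x, hB.eq q x, hB.eq q p]
      ring
    exact nonneg_of_mul_nonneg_right (hdefect ▸ sub_nonneg.2 h) (by positivity)
  have hlim : Tendsto (fun s : ℝ => c + b * s + a * s ^ 2) (𝓝[>] 0) (𝓝 c) := by
    have h := (by fun_prop : Continuous fun s : ℝ => c + b * s + a * s ^ 2).tendsto 0
    simpa using h.mono_left nhdsWithin_le_nhds
  exact sub_nonneg.1 (ge_of_tendsto hlim (eventually_nhdsWithin_of_forall hpoly))

end LinearMap.BilinForm

namespace Matrix

open LinearMap.BilinForm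

variable {n : ℕ}

theorem diag_mul_le_sq_mulVec {ι : Type*} [Fintype ι] [DecidableEq ι] {D : Matrix ι ι ℝ}
    (hD : D.IsSymm) (hK : (toBilin' D).ReverseCauchySchwarzOn (ConvexCone.positive ℝ (ι → ℝ)))
    (i : ι) (z : ι → ℝ) : D i i * (z ⬝ᵥ D *ᵥ z) ≤ (D *ᵥ z) i ^ 2 := by
  have h := hK.mul_le_sq_sub (isSymm_toBilin'_iff_isSymm.2 hD) (x := Pi.single i 1) (p := z⁺)
    (q := z⁻) (Pi.single_nonneg.2 zero_le_one) (posPart_nonneg z) (negPart_nonneg z)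
  simpa [posPart_sub_negPart, toBilin'_apply'] using h

/-- Chiò's pivotal condensation of `A` at the entry `A 0 0`. -/
def condensation {R : Type*} [CommRing R] (A : Matrix (Fin (n + 1)) (Fin (n + 1)) R) :
    Matrix (Fin n) (Fin n) R :=
  of fun i j => A 0 0 * A i.succ j.succ - A i.succ 0 * A 0 j.succ

theorem pow_mul_det_eq_mul_det_condensation {R : Type*} [CommRing R]
    (A : Matrix (Fin (n + 1)) (Fin (n + 1)) R) :
    A 0 0 ^ n * A.det = A 0 0 * A.condensation.det := by
  -- `P * A` replaces each row `Aᵢ` (`i ≠ 0`) by `A₀₀ Aᵢ - Aᵢ₀ A₀`, clearing the first column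
  let P : Matrix (Fin (n + 1)) (Fin (n + 1)) R :=
    of (Fin.cons (Pi.single 0 1) fun i => A 0 0 • Pi.single i.succ 1 - A i.succ 0 • Pi.single 0 1)
  have hP : P.det = A 0 0 ^ n := by
    rw [det_of_isLowerTriangular P ?_, Fin.prod_univ_succ]
    · simp [P]
    · intro i j (hij : i < j)
      induction i using Fin.cases with
      | zero => simp [P, hij.ne']
      | succ i => simp [P, hij.ne', ((Fin.succ_pos i).trans hij).ne']
  have hrow_zero (j) : (P * A) 0 j = A 0 j := by
    simp [P, mul_apply, Pi.single_apply]
  have hrow_succ (i : Fin n) (j) :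
      (P * A) i.succ j = A 0 0 * A i.succ j - A i.succ 0 * A 0 j := by
    simp [P, mul_apply, Pi.single_apply, sub_mul, Finset.sum_sub_distrib]
  have hminor : (P * A).submatrix Fin.succ Fin.succ = A.condensation := by
    ext i j
    simp [hrow_succ, condensation]
  rw [← hP, ← det_mul, det_succ_column_zero, Fin.sum_univ_succ]
  simp [hrow_zero, hrow_succ, hminor, mul_comm (A 0 0)]

theorem dotProduct_condensation_mulVec {R : Type*} [CommRing R]
    (A : Matrix (Fin (n + 1)) (Fin (n + 1)) R) (w : Fin n → R) :
    w ⬝ᵥ A.condensation *ᵥ w = A 0 0 * (Fin.cons 0 w ⬝ᵥ A *ᵥ Fin.cons 0 w) -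
      (A *ᵥ Fin.cons 0 w) 0 * (Fin.cons 0 w ᵥ* A) 0 := by
  simp only [condensation, dotProduct, mulVec, vecMul, Fin.sum_univ_succ, Fin.cons_zero,
    Fin.cons_succ, zero_mul, mul_zero, zero_add, of_apply]
  simp only [Finset.mul_sum, Finset.sum_mul, ← Finset.sum_sub_distrib]
  refine Finset.sum_congr rfl fun i _ => Finset.sum_congr rfl fun j _ => ?_
  ring

theorem posSemidef_neg_condensation {A : Matrix (Fin (n + 1)) (Fin (n + 1)) ℝ} (hA : A.IsSymm)
    (hA₀ : ∀ z, A 0 0 * (z ⬝ᵥ A *ᵥ z) ≤ (A *ᵥ z) 0 ^ 2) : (-A.condensation).PosSemidef := by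
  rw [posSemidef_iff_dotProduct_mulVec]
  refine ⟨?_, fun w => ?_⟩
  · ext i j
    simp [condensation, hA.apply, mul_comm]
  · have h := hA₀ (Fin.cons 0 w)
    rw [star_trivial, neg_mulVec, dotProduct_neg, dotProduct_condensation_mulVec,
      ← mulVec_transpose, hA.eq]
    linarith

theorem neg_one_pow_mul_pow_mul_det_nonneg {D : Matrix (Fin (n + 1)) (Fin (n + 1)) ℝ}
    (hD : D.IsSymm)
    (hK : (toBilin' D).ReverseCauchySchwarzOn (ConvexCone.positive ℝ (Fin (n + 1) → ℝ)))
    (hn : 1 ≤ n) : 0 ≤ (-1) ^ n * D 0 0 ^ (n - 1) * D.det := by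
  obtain rfl | hn := hn.eq_or_lt
  · have h := hK (Pi.single 0 1) (Pi.single_nonneg.2 zero_le_one)
      (Pi.single 1 1) (Pi.single_nonneg.2 zero_le_one)
    rw [toBilin'_single, toBilin'_single, toBilin'_single] at h
    rw [det_fin_two, hD.apply 0 1]
    norm_num
    linarith [sq (D 0 1)]
  by_cases h00 : D 0 0 = 0
  · simp [h00, zero_pow (by omega : n - 1 ≠ 0)]
  have hdet : D 0 0 ^ (n - 1) * D.det = D.condensation.det := by
    refine mul_left_cancel₀ h00 ?_
    rw [← mul_assoc, ← pow_succ', Nat.sub_add_cancel hn.le]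
    exact pow_mul_det_eq_mul_det_condensation D
  calc 0 ≤ (-D.condensation).det :=
        (posSemidef_neg_condensation hD (diag_mul_le_sq_mulVec hD hK 0)).det_nonneg
    _ = (-1) ^ n * D 0 0 ^ (n - 1) * D.det := by
        rw [det_neg, Fintype.card_fin, mul_assoc, hdet]

end Matrix

section ConeForm

variable {V : Type*} [AddCommGroup V] [Module ℝ V] {C : Set V} {ι : Type*}

def IsNonnegBilinearOn (f : V → V → ℝ) (C : Set V) : Prop :=
  ∀ (a₁ a₂ b₁ b₂ : ℝ), 0 ≤ a₁ → 0 ≤ a₂ → 0 ≤ b₁ → 0 ≤ b₂ →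
    ∀ u₁ ∈ C, ∀ u₂ ∈ C, ∀ v₁ ∈ C, ∀ v₂ ∈ C,
      f (a₁ • u₁ + a₂ • u₂) (b₁ • v₁ + b₂ • v₂) =
        a₁ * b₁ * f u₁ v₁ + a₁ * b₂ * f u₁ v₂ + a₂ * b₁ * f u₂ v₁ + a₂ * b₂ * f u₂ v₂

theorem sum_smul_mem_of_nonneg (hC_add : ∀ u ∈ C, ∀ v ∈ C, u + v ∈ C)
    (hC_smul : ∀ (a : ℝ), 0 ≤ a → ∀ u ∈ C, a • u ∈ C) (hC₀ : (0 : V) ∈ C)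
    (s : Finset ι) {x : ι → ℝ} (hx : ∀ i, 0 ≤ x i) {u : ι → V} (hu : ∀ i, u i ∈ C) :
    ∑ i ∈ s, x i • u i ∈ C := by
  classical
  induction s using Finset.induction_on with
  | empty => simpa using hC₀
  | insert a s ha ih =>
    rw [Finset.sum_insert ha]
    exact hC_add _ (hC_smul _ (hx a) _ (hu a)) _ ih

theorem IsNonnegBilinearOn.apply_sum_smul_left {f : V → V → ℝ} (hf : IsNonnegBilinearOn f C)
    (hC_add : ∀ u ∈ C, ∀ v ∈ C, u + v ∈ C)
    (hC_smul : ∀ (a : ℝ), 0 ≤ a → ∀ u ∈ C, a • u ∈ C) (hC₀ : (0 : V) ∈ C)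
    (s : Finset ι) {x : ι → ℝ} (hx : ∀ i, 0 ≤ x i) {u : ι → V} (hu : ∀ i, u i ∈ C)
    {w : V} (hw : w ∈ C) :
    f (∑ i ∈ s, x i • u i) w = ∑ i ∈ s, x i * f (u i) w := by
  have hlin (a b : ℝ) (ha : 0 ≤ a) (hb : 0 ≤ b) (v₁) (hv₁ : v₁ ∈ C) (v₂) (hv₂ : v₂ ∈ C) :
      f (a • v₁ + b • v₂) w = a * f v₁ w + b * f v₂ w := by
    simpa using hf a b 1 0 ha hb zero_le_one le_rfl v₁ hv₁ v₂ hv₂ w hw w hw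
  classical
  induction s using Finset.induction_on with
  | empty => simpa using hlin 0 0 le_rfl le_rfl 0 hC₀ 0 hC₀
  | insert a s ha ih =>
    have h := hlin (x a) 1 (hx a) zero_le_one (u a) (hu a) _
      (sum_smul_mem_of_nonneg hC_add hC_smul hC₀ s hx hu)
    rw [one_smul, one_mul, ih] at h
    rw [Finset.sum_insert ha, Finset.sum_insert ha, h]

theorem IsNonnegBilinearOn.reverseCauchySchwarzOn_gram [Fintype ι] [DecidableEq ι]
    {f : V → V → ℝ} (hf : IsNonnegBilinearOn f C) (hC_add : ∀ u ∈ C, ∀ v ∈ C, u + v ∈ C)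
    (hC_smul : ∀ (a : ℝ), 0 ≤ a → ∀ u ∈ C, a • u ∈ C) (hC₀ : (0 : V) ∈ C)
    (hsymm : ∀ u ∈ C, ∀ v ∈ C, f u v = f v u)
    (hAF : ∀ u ∈ C, ∀ v ∈ C, f u u * f v v ≤ (f u v) ^ 2) {u : ι → V} (hu : ∀ i, u i ∈ C) :
    (Matrix.toBilin' (Matrix.of fun i j => f (u i) (u j))).ReverseCauchySchwarzOn
      (ConvexCone.positive ℝ (ι → ℝ)) := by
  have hmem {x : ι → ℝ} (hx : 0 ≤ x) : ∑ i, x i • u i ∈ C :=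
    sum_smul_mem_of_nonneg hC_add hC_smul hC₀ _ hx hu
  have hgram {x y : ι → ℝ} (hx : 0 ≤ x) (hy : 0 ≤ y) :
      Matrix.toBilin' (Matrix.of fun i j => f (u i) (u j)) x y =
        f (∑ i, x i • u i) (∑ j, y j • u j) := by
    rw [hf.apply_sum_smul_left hC_add hC_smul hC₀ _ hx hu (hmem hy), Matrix.toBilin'_apply]
    refine Finset.sum_congr rfl fun i _ => ?_
    rw [hsymm _ (hu i) _ (hmem hy), hf.apply_sum_smul_left hC_add hC_smul hC₀ _ hy hu (hu i),
      Finset.mul_sum]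
    refine Finset.sum_congr rfl fun j _ => ?_
    rw [hsymm _ (hu j) _ (hu i), Matrix.of_apply]
    ring
  intro x hx y hy
  rw [hgram hx hx, hgram hy hy, hgram hx hy]
  exact hAF _ (hmem hx) _ (hmem hy)

end ConeForm

/-- For a symmetric, nonnegatively-bilinear function `f` on a convex cone `C`
satisfying the Alexandrov–Fenchel type relation, and any `u₀,…,u_r ∈ C` with
`dᵢⱼ = f(uᵢ,uⱼ)`, one has `(−1)^r · d₀₀^(r−1) · det((dᵢⱼ)₀≤i,j≤r) ≥ 0`. -/
theorem af_determinantal_sign {V : Type*} [AddCommGroup V] [Module ℝ V] (C : Set V)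
    (hC_add : ∀ u ∈ C, ∀ v ∈ C, u + v ∈ C)
    (hC_smul : ∀ (a : ℝ), 0 ≤ a → ∀ u ∈ C, a • u ∈ C)
    (f : V → V → ℝ)
    (hsymm : ∀ u ∈ C, ∀ v ∈ C, f u v = f v u)
    (hbilin : ∀ (a₁ a₂ b₁ b₂ : ℝ), 0 ≤ a₁ → 0 ≤ a₂ → 0 ≤ b₁ → 0 ≤ b₂ →
      ∀ u₁ ∈ C, ∀ u₂ ∈ C, ∀ v₁ ∈ C, ∀ v₂ ∈ C,
        f (a₁ • u₁ + a₂ • u₂) (b₁ • v₁ + b₂ • v₂) =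
          a₁ * b₁ * f u₁ v₁ + a₁ * b₂ * f u₁ v₂ + a₂ * b₁ * f u₂ v₁ + a₂ * b₂ * f u₂ v₂)
    (hAF : ∀ u ∈ C, ∀ v ∈ C, f u u * f v v ≤ (f u v) ^ 2)
    (r : ℕ) (hr : 1 ≤ r) (u : Fin (r + 1) → V) (hu : ∀ i, u i ∈ C) :
    0 ≤ (-1 : ℝ) ^ r * (f (u 0) (u 0)) ^ (r - 1) *
        (Matrix.of fun i j : Fin (r + 1) => f (u i) (u j)).det := by
  have hC₀ : (0 : V) ∈ C := by simpa using hC_smul 0 le_rfl (u 0) (hu 0)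
  have hf : IsNonnegBilinearOn f C := hbilin
  have hD : (Matrix.of fun i j : Fin (r + 1) => f (u i) (u j)).IsSymm :=
    Matrix.IsSymm.ext fun i j => hsymm _ (hu j) _ (hu i)
  exact Matrix.neg_one_pow_mul_pow_mul_det_nonneg hD
    (hf.reverseCauchySchwarzOn_gram hC_add hC_smul hC₀ hsymm hAF hu) hr
end

section
/- Let A, B, A₃, …, Aₙ be n × n complex Hermitian matrices with A, A₃, …, Aₙ positive semidefinite and B arbitrary Hermitian. Then D(A, B, A₃, …, Aₙ)² ≥ D(A, A, A₃, …, Aₙ) · D(B, B, A₃, …, Aₙ). -/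
open scoped ComplexOrder

/-- The mixed discriminant of `n` complex `n × n` matrices. -/
noncomputable def mixedDisc {n : ℕ} (A : Fin n → Matrix (Fin n) (Fin n) ℂ) : ℂ :=
  (n.factorial : ℂ)⁻¹ * ∑ σ : Equiv.Perm (Fin n), (Matrix.of fun i j => A (σ j) i j).det

/-!
For positive definite `V`, the mixed discriminant whose slots in a set `S` all hold one matrix
`H + i P` (`H` Hermitian, `P` positive definite) and whose other slots hold `V` never vanishes.
Downward induction on `S`: adding a slot `a` and filling the enlarged set along the line
`H + i P + s • V a` gives a polynomial in `s` without zeros in the closed upper half-plane, so by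
Gauss–Lucas its derivative does not vanish at `0`; by symmetry that derivative is `|S| + 1` times
the mixed discriminant for `S`.

With `S = {0, 1}` this says that the real quadratic `t ↦ D(X + t E, X + t E, W)` has no non-real
roots, and its discriminant is the Alexandrov–Fenchel inequality. The positive semidefinite case
follows by perturbing with `ε • 1` and letting `ε → 0`.
-/

open Matrix Finset Polynomial Complex

namespace MultilinearMap

variable {R ι M : Type*} [CommRing R] [DecidableEq ι] [AddCommGroup M] [Module R M]
  (f : MultilinearMap R (fun _ : ι => M) R) (S : Finset ι)

theorem map_piecewise_const_smul (c : R) (y : M) (w : ι → M) :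
    f (S.piecewise (fun _ => c • y) w) = c ^ S.card * f (S.piecewise (fun _ => y) w) := by
  have h := f.map_piecewise_smul (fun _ => c) (S.piecewise (fun _ => y) w) S
  rw [prod_const, smul_eq_mul] at h
  rw [← h]
  congr 1
  exact S.piecewise_congr (fun i hi => by rw [piecewise_eq_of_mem _ _ _ hi])
    fun i hi => (piecewise_eq_of_notMem _ _ _ hi).symm

/-- The polynomial `s ↦ f (S.piecewise (fun _ => x + s • y) w)`, expanded by multilinearity. -/
noncomputable def piecewiseLinePoly (x y : M) (w : ι → M) : R[X] :=
  ∑ T ∈ S.powerset, C (f (T.piecewise (fun _ => y) (S.piecewise (fun _ => x) w))) * X ^ T.card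

variable (x y : M) (w : ι → M)

theorem eval_piecewiseLinePoly (s : R) :
    (f.piecewiseLinePoly S x y w).eval s = f (S.piecewise (fun _ => x + s • y) w) := by
  have hsplit : S.piecewise (fun _ => x + s • y) w = S.piecewise
      ((fun _ => s • y) + S.piecewise (fun _ => x) w) (S.piecewise (fun _ => x) w) :=
    S.piecewise_congr (fun i hi => by simp [piecewise_eq_of_mem _ _ _ hi, add_comm])
      fun i hi => (piecewise_eq_of_notMem _ _ _ hi).symm
  rw [hsplit, f.map_piecewise_add, piecewiseLinePoly, eval_finsetSum]
  refine sum_congr rfl fun T _ => ?_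
  rw [map_piecewise_const_smul, eval_mul, eval_C, eval_pow, eval_X, mul_comm]

theorem coeff_piecewiseLinePoly (k : ℕ) :
    (f.piecewiseLinePoly S x y w).coeff k =
      ∑ T ∈ S.powersetCard k, f (T.piecewise (fun _ => y) (S.piecewise (fun _ => x) w)) := by
  simp only [piecewiseLinePoly, finsetSum_coeff, coeff_C_mul, coeff_X_pow, mul_ite, mul_one,
    mul_zero, powersetCard_eq_filter, sum_filter, eq_comm]

theorem coeff_card_piecewiseLinePoly :
    (f.piecewiseLinePoly S x y w).coeff S.card = f (S.piecewise (fun _ => y) w) := by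
  rw [coeff_piecewiseLinePoly, powersetCard_self, sum_singleton, piecewise_idem_right]

theorem coeff_one_piecewiseLinePoly_of_symm (hf : ∀ v (σ : Equiv.Perm ι), f (v ∘ σ) = f v)
    {a : ι} (ha : a ∈ S) :
    (f.piecewiseLinePoly S x y w).coeff 1 =
      S.card * f (Function.update (S.piecewise (fun _ => x) w) a y) := by
  rw [coeff_piecewiseLinePoly, powersetCard_one, sum_map, ← nsmul_eq_mul, ← sum_const]
  refine sum_congr rfl fun b hb => ?_
  rw [Function.Embedding.coeFn_mk, piecewise_singleton, ← hf _ (Equiv.swap a b),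
    Function.update_comp_equiv, Equiv.symm_swap, Equiv.swap_apply_right]
  congr 2
  ext i
  rw [Function.comp_apply]
  rcases eq_or_ne i a with rfl | hia
  · rw [Equiv.swap_apply_left, piecewise_eq_of_mem _ _ _ ha, piecewise_eq_of_mem _ _ _ hb]
  rcases eq_or_ne i b with rfl | hib
  · rw [Equiv.swap_apply_right, piecewise_eq_of_mem _ _ _ ha, piecewise_eq_of_mem _ _ _ hb]
  · rw [Equiv.swap_apply_of_ne_of_ne hia hib]

end MultilinearMap

theorem Polynomial.eval_derivative_ne_zero_of_im_nonneg {p : ℂ[X]} (hp : 0 < p.degree)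
    (h : ∀ z : ℂ, 0 ≤ z.im → p.eval z ≠ 0) {z : ℂ} (hz : 0 ≤ z.im) :
    p.derivative.eval z ≠ 0 := by
  intro hz0
  have hroots : p.rootSet ℂ ⊆ {w : ℂ | w.im < 0} := fun w hw => by
    by_contra hw'
    exact h w (not_lt.1 hw') (by simpa using (mem_rootSet.1 hw).2)
  have hder : p.derivative ≠ 0 :=
    derivative_ne_zero.2 (natDegree_pos_iff_degree_pos.2 hp).ne'
  have hmem : z ∈ p.derivative.rootSet ℂ := mem_rootSet.2 ⟨hder, by simpa using hz0⟩
  exact (convexHull_min hroots (convex_halfSpace_im_lt 0)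
    (rootSet_derivative_subset_convexHull_rootSet hp hmem)).not_ge hz

section MixedDiscriminant

variable {m : ℕ}

noncomputable def mixedDiscMultilinear (m : ℕ) :
    MultilinearMap ℂ (fun _ : Fin m => Matrix (Fin m) (Fin m) ℂ) ℂ :=
  (m.factorial : ℂ)⁻¹ • ∑ σ : Equiv.Perm (Fin m),
    ((detRowAlternating : (Fin m → ℂ) [⋀^Fin m]→ₗ[ℂ] ℂ).toMultilinearMap.compLinearMap
      fun j => (LinearMap.proj j : (Fin m → Fin m → ℂ) →ₗ[ℂ] _) ∘ₗ
        (transposeLinearEquiv (Fin m) (Fin m) ℂ ℂ).toLinearMap).domDomCongr σ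

@[simp]
theorem coe_mixedDiscMultilinear : ⇑(mixedDiscMultilinear m) = mixedDisc := by
  ext A
  simp only [mixedDiscMultilinear, mixedDisc, _root_.smul_apply, smul_eq_mul, _root_.sum_apply,
    MultilinearMap.domDomCongr_apply, MultilinearMap.compLinearMap_apply]
  congr 1
  refine sum_congr rfl fun σ _ => ?_
  rw [← det_transpose]
  rfl

theorem mixedDisc_comp_perm (A : Fin m → Matrix (Fin m) (Fin m) ℂ) (τ : Equiv.Perm (Fin m)) :
    mixedDisc (A ∘ τ) = mixedDisc A := by
  unfold mixedDisc
  congr 1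
  exact Fintype.sum_equiv (Equiv.mulLeft τ) _ _ fun σ => rfl

theorem mixedDisc_const (M : Matrix (Fin m) (Fin m) ℂ) : mixedDisc (fun _ => M) = M.det := by
  simp only [mixedDisc, sum_const, card_univ, Fintype.card_perm, Fintype.card_fin, nsmul_eq_mul,
    ne_eq, Nat.cast_eq_zero, Nat.factorial_ne_zero, not_false_eq_true, inv_mul_cancel_left₀]
  rfl

theorem mixedDisc_transpose (A : Fin m → Matrix (Fin m) (Fin m) ℂ) :
    mixedDisc (fun k => (A k)ᵀ) = mixedDisc A := by
  unfold mixedDisc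
  congr 1
  have hrow : ∀ σ : Equiv.Perm (Fin m), (of fun i j => (A (σ j))ᵀ i j).det =
      ∑ π : Equiv.Perm (Fin m), Equiv.Perm.sign π • ∏ i, A (σ (π i)) (π i) i := fun σ => by
    rw [← det_transpose, det_apply]
    rfl
  simp only [hrow, det_apply, of_apply]
  rw [sum_comm]
  conv_rhs => rw [sum_comm]
  refine sum_congr rfl fun π _ => ?_
  exact Fintype.sum_equiv (Equiv.mulRight π) _ _ fun σ => rfl

theorem star_mixedDisc (A : Fin m → Matrix (Fin m) (Fin m) ℂ) :
    star (mixedDisc A) = mixedDisc (fun k => (A k).map star) := by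
  unfold mixedDisc
  rw [star_mul', star_inv₀, star_natCast, star_sum]
  congr 1
  refine sum_congr rfl fun σ _ => ?_
  rw [← det_conjTranspose, ← det_transpose]
  rfl

theorem star_mixedDisc_of_isHermitian {A : Fin m → Matrix (Fin m) (Fin m) ℂ}
    (hA : ∀ k, (A k).IsHermitian) : star (mixedDisc A) = mixedDisc A := by
  have hmap : (fun k => (A k).map star) = fun k => (A k)ᵀ := by
    ext k i j
    exact (hA k).apply j i
  rw [star_mixedDisc, hmap, mixedDisc_transpose]

@[fun_prop]
theorem continuous_mixedDisc : Continuous (mixedDisc : (Fin m → Matrix (Fin m) (Fin m) ℂ) → ℂ) := by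
  unfold mixedDisc
  fun_prop

end MixedDiscriminant

theorem Matrix.det_add_I_smul_ne_zero {n : Type*} [Fintype n] [DecidableEq n]
    {H P : Matrix n n ℂ} (hH : H.IsHermitian) (hP : P.PosDef) : (H + I • P).det ≠ 0 := by
  intro hdet
  obtain ⟨v, hv, hHPv⟩ := exists_mulVec_eq_zero_iff.2 hdet
  have hquad : star v ⬝ᵥ H *ᵥ v + I * (star v ⬝ᵥ P *ᵥ v) = 0 := by
    rw [← smul_eq_mul, ← dotProduct_smul, ← smul_mulVec, ← dotProduct_add, ← add_mulVec, hHPv,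
      dotProduct_zero]
  have hre := (Complex.pos_iff.1 (hP.dotProduct_mulVec_pos hv)).1
  have him := congrArg Complex.im hquad
  simp only [add_im, mul_im, I_re, I_im, zero_mul, one_mul, zero_add, zero_im] at him
  have hHim : (star v ⬝ᵥ H *ᵥ v).im = 0 := hH.im_star_dotProduct_mulVec_self v
  linarith

theorem Matrix.smul_eq_re_smul_add_I_smul_im_smul {n : Type*} (z : ℂ) (M : Matrix n n ℂ) :
    z • M = z.re • M + I • z.im • M := by
  conv_lhs => rw [← re_add_im z]
  rw [add_smul, mul_comm, mul_smul, ← Complex.coe_smul, ← Complex.coe_smul]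

section Stability

variable {m : ℕ} {V : Fin m → Matrix (Fin m) (Fin m) ℂ}

theorem mixedDisc_piecewise_ne_zero_of_insert (hV : ∀ i, (V i).PosDef) {S : Finset (Fin m)}
    {a : Fin m} (ha : a ∉ S)
    (hins : ∀ H P : Matrix (Fin m) (Fin m) ℂ, H.IsHermitian → P.PosDef →
      mixedDisc ((insert a S).piecewise (fun _ => H + I • P) V) ≠ 0)
    {H P : Matrix (Fin m) (Fin m) ℂ} (hH : H.IsHermitian) (hP : P.PosDef) :
    mixedDisc (S.piecewise (fun _ => H + I • P) V) ≠ 0 := by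
  set f := mixedDiscMultilinear m
  set p := f.piecewiseLinePoly (insert a S) (H + I • P) (V a) V
  have hp_eval : ∀ z : ℂ, 0 ≤ z.im → p.eval z ≠ 0 := fun z hz => by
    have hsplit : H + I • P + z • V a = (H + z.re • V a) + I • (P + z.im • V a) := by
      rw [smul_eq_re_smul_add_I_smul_im_smul z, smul_add]
      abel
    rw [MultilinearMap.eval_piecewiseLinePoly, hsplit, coe_mixedDiscMultilinear]
    exact hins _ _ (hH.add ((hV a).isHermitian.smul (IsSelfAdjoint.all z.re)))
      (hP.add_posSemidef ((hV a).posSemidef.smul hz))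
  have hlead : p.coeff (insert a S).card ≠ 0 := by
    have h := hins 0 (V a) isHermitian_zero (hV a)
    rw [zero_add, ← coe_mixedDiscMultilinear, MultilinearMap.map_piecewise_const_smul] at h
    rw [MultilinearMap.coeff_card_piecewiseLinePoly]
    exact right_ne_zero_of_mul h
  have hdeg : 0 < p.degree := natDegree_pos_iff_degree_pos.1 <|
    (card_pos.2 ⟨a, mem_insert_self a S⟩).trans_le (le_natDegree_of_ne_zero hlead)
  have hder := eval_derivative_ne_zero_of_im_nonneg hdeg hp_eval (z := 0) le_rfl
  have hsymm : ∀ A (σ : Equiv.Perm (Fin m)), f (A ∘ σ) = f A := by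
    simpa only [f, coe_mixedDiscMultilinear] using mixedDisc_comp_perm
  rw [← coeff_zero_eq_eval_zero, coeff_derivative, zero_add, Nat.cast_zero, zero_add, mul_one,
    MultilinearMap.coeff_one_piecewiseLinePoly_of_symm _ _ _ _ _ hsymm (mem_insert_self a S),
    piecewise_insert, Function.update_idem, Function.update_eq_self_iff.2
      (piecewise_eq_of_notMem _ _ _ ha).symm, coe_mixedDiscMultilinear] at hder
  exact right_ne_zero_of_mul hder

theorem mixedDisc_piecewise_ne_zero (hV : ∀ i, (V i).PosDef) (S : Finset (Fin m))
    {H P : Matrix (Fin m) (Fin m) ℂ} (hH : H.IsHermitian) (hP : P.PosDef) :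
    mixedDisc (S.piecewise (fun _ => H + I • P) V) ≠ 0 := by
  obtain ⟨T, rfl⟩ : ∃ T, S = Tᶜ := ⟨Sᶜ, (compl_compl S).symm⟩
  induction T using Finset.induction_on generalizing H P with
  | empty =>
    rw [compl_empty, piecewise_univ, mixedDisc_const]
    exact det_add_I_smul_ne_zero hH hP
  | insert a T ha ih =>
    have hS : insert a (insert a T)ᶜ = Tᶜ := by
      ext i
      by_cases hi : i = a <;> simp [hi, ha]
    exact mixedDisc_piecewise_ne_zero_of_insert hV (by simp)
      (fun H' P' hH' hP' => hS ▸ ih hH' hP') hH hP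

end Stability

theorem sq_ge_mul_of_quadratic_ne_zero {u v w : ℝ}
    (h : ∀ z : ℂ, 0 < z.im → (u : ℂ) + 2 * w * z + v * z ^ 2 ≠ 0) : u * v ≤ w ^ 2 := by
  by_contra! hlt
  have hv : v ≠ 0 := by
    rintro rfl
    nlinarith [sq_nonneg w]
  have hdisc : 0 < u * v - w ^ 2 := by linarith
  set y := √(u * v - w ^ 2) / |v|
  have hy : 0 < y := div_pos (Real.sqrt_pos.2 hdisc) (abs_pos.2 hv)
  have hy2 : (v : ℂ) ^ 2 * (y : ℂ) ^ 2 = u * v - w ^ 2 := by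
    have : v ^ 2 * y ^ 2 = u * v - w ^ 2 := by
      rw [div_pow, sq_abs, Real.sq_sqrt hdisc.le, mul_div_cancel₀ _ (pow_ne_zero 2 hv)]
    exact_mod_cast this
  apply h (-(w / v) + y * I) (by simpa using hy)
  have hvc : (v : ℂ) ≠ 0 := ofReal_ne_zero.2 hv
  field_simp
  linear_combination (v : ℂ) ^ 2 * y ^ 2 * I_sq - hy2

section FinCons

variable {n : ℕ}

theorem MultilinearMap.map_finCons_finCons_add_smul {R M : Type*} [CommRing R] [AddCommGroup M]
    [Module R M] (f : MultilinearMap R (fun _ : Fin (n + 2) => M) R) (x y : M) (t : R)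
    (W : Fin n → M) :
    f (Fin.cons (x + t • y) (Fin.cons (x + t • y) W)) =
      f (Fin.cons x (Fin.cons x W)) +
        t * (f (Fin.cons y (Fin.cons x W)) + f (Fin.cons x (Fin.cons y W))) +
          t ^ 2 * f (Fin.cons y (Fin.cons y W)) := by
  have hsnd : ∀ a, f (Fin.cons a (Fin.cons (x + t • y) W)) =
      f (Fin.cons a (Fin.cons x W)) + t * f (Fin.cons a (Fin.cons y W)) := fun a => by
    rw [← f.curryLeft_apply, MultilinearMap.cons_add, MultilinearMap.cons_smul, f.curryLeft_apply,
      f.curryLeft_apply, smul_eq_mul]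
  rw [f.cons_add, f.cons_smul, hsnd, hsnd, smul_eq_mul]
  ring

theorem mixedDisc_finCons_swap (x y : Matrix (Fin (n + 2)) (Fin (n + 2)) ℂ)
    (W : Fin n → Matrix (Fin (n + 2)) (Fin (n + 2)) ℂ) :
    mixedDisc (Fin.cons x (Fin.cons y W)) = mixedDisc (Fin.cons y (Fin.cons x W)) := by
  rw [← mixedDisc_comp_perm _ (Equiv.swap 0 1)]
  congr 1
  ext i : 1
  refine Fin.cases ?_ (Fin.cases ?_ fun k => ?_) i
  · simp
  · simp
  · simp [Equiv.swap_apply_def, Fin.ext_iff]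

theorem piecewise_zero_one_finCons {α : Type*} (z x y : α) (W : Fin n → α) :
    ({0, 1} : Finset (Fin (n + 2))).piecewise (fun _ => z) (Fin.cons x (Fin.cons y W)) =
      Fin.cons z (Fin.cons z W) := by
  ext i
  refine Fin.cases ?_ (Fin.cases ?_ fun k => ?_) i
  · simp
  · simp
  · simp [Fin.ext_iff]

end FinCons

theorem mixedDisc_finCons_sq_ge_of_posDef {n : ℕ} {X E : Matrix (Fin (n + 2)) (Fin (n + 2)) ℂ}
    {W : Fin n → Matrix (Fin (n + 2)) (Fin (n + 2)) ℂ} (hX : X.IsHermitian) (hE : E.PosDef)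
    (hW : ∀ i, (W i).PosDef) :
    (mixedDisc (Fin.cons E (Fin.cons X W))).re ^ 2 ≥
      (mixedDisc (Fin.cons E (Fin.cons E W))).re * (mixedDisc (Fin.cons X (Fin.cons X W))).re := by
  have hreal : ∀ {Y Z : Matrix (Fin (n + 2)) (Fin (n + 2)) ℂ}, Y.IsHermitian → Z.IsHermitian →
      ((mixedDisc (Fin.cons Y (Fin.cons Z W))).re : ℂ) = mixedDisc (Fin.cons Y (Fin.cons Z W)) :=
    fun hY hZ => conj_eq_iff_re.1 <| star_mixedDisc_of_isHermitian <|
      Fin.cases hY (Fin.cases hZ fun i => (hW i).isHermitian)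
  rw [mul_comm, ge_iff_le]
  refine sq_ge_mul_of_quadratic_ne_zero fun z hz => ?_
  have hexpand := (mixedDiscMultilinear (n + 2)).map_finCons_finCons_add_smul X E z W
  rw [coe_mixedDiscMultilinear, mixedDisc_finCons_swap X E] at hexpand
  rw [hreal hX hX, hreal hE.isHermitian hX, hreal hE.isHermitian hE.isHermitian]
  convert mixedDisc_piecewise_ne_zero (V := Fin.cons E (Fin.cons E W))
    (Fin.cases hE (Fin.cases hE hW)) {0, 1} (hX.add (hE.isHermitian.smul (.all z.re)))
    (hE.smul hz) using 1
  rw [piecewise_zero_one_finCons, add_assoc X, ← smul_eq_re_smul_add_I_smul_im_smul, hexpand]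
  ring

/-- complex Alexandrov–Fenchel inequality for mixed discriminants of
positive semidefinite Hermitian matrices `A, A₃, …, Aₙ` and arbitrary Hermitian `B`. -/
theorem af_mixedDisc_posSemidef (n : ℕ)
    (A B : Matrix (Fin (n + 2)) (Fin (n + 2)) ℂ)
    (rest : Fin n → Matrix (Fin (n + 2)) (Fin (n + 2)) ℂ)
    (hA : A.PosSemidef) (hrest : ∀ i, (rest i).PosSemidef) (hB : B.IsHermitian) :
    (mixedDisc (Fin.cons A (Fin.cons B rest))).re ^ 2 ≥
      (mixedDisc (Fin.cons A (Fin.cons A rest))).re *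
        (mixedDisc (Fin.cons B (Fin.cons B rest))).re := by
  let g : ℝ → ℝ := fun ε =>
    (mixedDisc (Fin.cons (A + ε • 1) (Fin.cons B fun i => rest i + ε • 1))).re ^ 2 -
      (mixedDisc (Fin.cons (A + ε • 1) (Fin.cons (A + ε • 1) fun i => rest i + ε • 1))).re *
        (mixedDisc (Fin.cons B (Fin.cons B fun i => rest i + ε • 1))).re
  have hg : Continuous g := by fun_prop
  have hg_pos : ∀ ε > 0, 0 ≤ g ε := fun ε hε => sub_nonneg.2 <|
    mixedDisc_finCons_sq_ge_of_posDef hB (PosDef.posSemidef_add hA (PosDef.one.smul hε))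
      fun i => PosDef.posSemidef_add (hrest i) (PosDef.one.smul hε)
  have hg0 : 0 ≤ g 0 := ge_of_tendsto ((hg.tendsto 0).mono_left nhdsWithin_le_nhds)
    (eventually_nhdsWithin_of_forall (s := Set.Ioi 0) hg_pos)
  simpa [g] using hg0
end

section
/- The wedge product of the constant (1,1)-forms on ℂⁿ associated to n × n complex matrices A₁, …, Aₙ satisfies α(A₁) ∧ ⋯ ∧ α(Aₙ) = n! · D(A₁,…,Aₙ) · 2ⁿ · dV(ℂⁿ), where α(A) = √−1 Σ_{i,j} a_{ij} dzⁱ ∧ dz̄ʲ and dV(ℂⁿ) is the standard Euclidean volume form dx¹ ∧ dy¹ ∧ ⋯ ∧ dxⁿ ∧ dyⁿ. -/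
namespace Stmt11

variable (n : ℕ)

/-- The generator `dzⁱ` of the (constant-coefficient) algebra of complex forms on `ℂⁿ`,
modelled in the exterior algebra over `ℂ` on the `2n`-dimensional space spanned by the
`dzⁱ` (indexed by `Sum.inl i`) and the `dz̄ʲ` (indexed by `Sum.inr j`). -/
noncomputable def dz (i : Fin n) : ExteriorAlgebra ℂ ((Fin n ⊕ Fin n) → ℂ) :=
  ExteriorAlgebra.ι ℂ (Pi.single (Sum.inl i) 1)

/-- The generator `dz̄ʲ`. -/
noncomputable def dzbar (j : Fin n) : ExteriorAlgebra ℂ ((Fin n ⊕ Fin n) → ℂ) :=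
  ExteriorAlgebra.ι ℂ (Pi.single (Sum.inr j) 1)

/-- The constant `(1,1)`-form `α(A) = √−1 Σᵢⱼ aᵢⱼ dzⁱ ∧ dz̄ʲ` associated to a matrix. -/
noncomputable def alphaForm (A : Matrix (Fin n) (Fin n) ℂ) :
    ExteriorAlgebra ℂ ((Fin n ⊕ Fin n) → ℂ) :=
  ∑ i : Fin n, ∑ j : Fin n, (Complex.I * A i j) • (dz n i * dzbar n j)

/-- The Euclidean volume form `dV(ℂⁿ) = dx¹∧dy¹∧⋯∧dxⁿ∧dyⁿ`; since
`dzᵏ ∧ dz̄ᵏ = −2√−1 dxᵏ ∧ dyᵏ`, it equals `(√−1/2)ⁿ dz¹∧dz̄¹∧⋯∧dzⁿ∧dz̄ⁿ`. -/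
noncomputable def volForm : ExteriorAlgebra ℂ ((Fin n ⊕ Fin n) → ℂ) :=
  ((Complex.I / 2) ^ n) • ((List.finRange n).map fun k => dz n k * dzbar n k).prod

end Stmt11

open Equiv Function

theorem List.prod_ofFn_sum_smul {R A P : Type*} [CommSemiring R] [Semiring A] [Algebra R A]
    [Fintype P] {m : ℕ} (c : Fin m → P → R) (w : P → A) :
    (List.ofFn fun k => ∑ p, c k p • w p).prod
      = ∑ r : Fin m → P, (∏ k, c k (r k)) • (List.ofFn fun k => w (r k)).prod := by
  simp only [← MultilinearMap.mkPiAlgebraFin_apply (R := R), MultilinearMap.map_sum,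
    MultilinearMap.map_smul_univ]

theorem Fintype.sum_fun_eq_sum_perm {α M : Type*} [Fintype α] [DecidableEq α] [AddCommMonoid M]
    (F : (α → α) → M) (hF : ∀ f, ¬ Injective f → F f = 0) :
    ∑ f : α → α, F f = ∑ σ : Perm α, F σ := by
  refine (Fintype.sum_of_injective _ DFunLike.coe_injective _ _ (fun f hf => hF f ?_)
    fun _ => rfl).symm
  exact fun hinj => hf ⟨Equiv.ofBijective f hinj.bijective_of_finite, rfl⟩

namespace ExteriorAlgebra

variable {R M : Type*} [CommRing R] [AddCommGroup M] [Module R M]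

theorem ι_mul_ιMulti_comm {m : ℕ} (y : M) (x : Fin m → M) :
    ι R y * ιMulti R m x = (-1 : R) ^ m • (ιMulti R m x * ι R y) := by
  induction m with
  | zero => simp
  | succ m ih =>
    have anticomm : ι R y * ι R (x 0) = -(ι R (x 0) * ι R y) :=
      eq_neg_of_add_eq_zero_left (ι_add_mul_swap y (x 0))
    rw [ιMulti_succ_apply, ← mul_assoc, anticomm, neg_mul, mul_assoc, ih, pow_succ, mul_neg_one,
      neg_smul, mul_smul_comm, mul_assoc]

theorem prod_ofFn_ι_mul_ι {m : ℕ} (x y : Fin m → M) :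
    (List.ofFn fun k => ι R (x k) * ι R (y k)).prod
      = (-1 : R) ^ m.choose 2 • (ιMulti R m x * ιMulti R m y) := by
  induction m with
  | zero => simp
  | succ m ih =>
    rw [List.ofFn_succ, List.prod_cons, ih, ιMulti_succ_apply, ιMulti_succ_apply,
      Nat.choose_succ_succ', Nat.choose_one_right, pow_add, mul_smul_comm, mul_assoc,
      ← mul_assoc (ι R (y 0)), ι_mul_ιMulti_comm, smul_mul_assoc, mul_smul_comm, smul_smul,
      mul_comm ((-1 : R) ^ m)]
    simp only [mul_assoc]
    rfl

end ExteriorAlgebra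

theorem factorial_mul_mixedDisc {n : ℕ} (A : Fin n → Matrix (Fin n) (Fin n) ℂ) :
    (n.factorial : ℂ) * mixedDisc A
      = ∑ σ : Perm (Fin n), ∑ τ : Perm (Fin n), (σ.sign * τ.sign) • ∏ k, A k (σ k) (τ k) := by
  rw [mixedDisc, mul_inv_cancel_left₀ (by exact_mod_cast n.factorial_ne_zero), Finset.sum_comm]
  refine Fintype.sum_equiv (Equiv.inv _) _ _ fun s => ?_
  rw [Matrix.det_apply]
  refine Fintype.sum_equiv (Equiv.mulRight s⁻¹) _ _ fun π => ?_
  have hsign : (π * s⁻¹).sign * (s⁻¹).sign = π.sign := by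
    rw [Perm.sign_mul, mul_assoc, Int.units_mul_self, mul_one]
  rw [Equiv.coe_mulRight, Equiv.inv_apply, hsign,
    ← Equiv.prod_comp s (fun k => A k ((π * s⁻¹) k) (s⁻¹ k))]
  simp

namespace Stmt11

variable (n : ℕ)

open ExteriorAlgebra

noncomputable def dzDzbarProd (f g : Fin n → Fin n) : ExteriorAlgebra ℂ ((Fin n ⊕ Fin n) → ℂ) :=
  (List.ofFn fun k => dz n (f k) * dzbar n (g k)).prod

theorem dzDzbarProd_eq (f g : Fin n → Fin n) :
    dzDzbarProd n f g = (-1 : ℂ) ^ n.choose 2 •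
      (ιMulti ℂ n (fun k => Pi.single (Sum.inl (f k)) 1)
        * ιMulti ℂ n (fun k => Pi.single (Sum.inr (g k)) 1)) :=
  prod_ofFn_ι_mul_ι _ _

theorem dzDzbarProd_eq_zero_of_not_injective_left {f : Fin n → Fin n} (g : Fin n → Fin n)
    (hf : ¬ Injective f) : dzDzbarProd n f g = 0 := by
  rw [dzDzbarProd_eq, ιMulti_eq_zero_of_not_inj, zero_mul, smul_zero]
  exact fun h => hf (Injective.of_comp (f := fun i => Pi.single (Sum.inl i) 1) h)

theorem dzDzbarProd_eq_zero_of_not_injective_right (f : Fin n → Fin n) {g : Fin n → Fin n}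
    (hg : ¬ Injective g) : dzDzbarProd n f g = 0 := by
  rw [dzDzbarProd_eq, ιMulti_eq_zero_of_not_inj (v := fun k => Pi.single (Sum.inr (g k)) 1),
    mul_zero, smul_zero]
  exact fun h => hg (Injective.of_comp (f := fun j => Pi.single (Sum.inr j) 1) h)

theorem dzDzbarProd_perm (σ τ : Perm (Fin n)) :
    dzDzbarProd n σ τ = (σ.sign * τ.sign) • dzDzbarProd n id id := by
  rw [dzDzbarProd_eq, dzDzbarProd_eq]
  have hσ := (ιMulti ℂ n).map_perm (fun k => (Pi.single (Sum.inl k) 1 : (Fin n ⊕ Fin n) → ℂ)) σ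
  have hτ := (ιMulti ℂ n).map_perm (fun k => (Pi.single (Sum.inr k) 1 : (Fin n ⊕ Fin n) → ℂ)) τ
  rw [comp_def] at hσ hτ
  rw [hσ, hτ, smul_mul_smul_comm, smul_comm]
  rfl

theorem volForm_eq : volForm n = (Complex.I / 2) ^ n • dzDzbarProd n id id := by
  rw [volForm, dzDzbarProd, List.ofFn_eq_map]
  rfl

theorem prod_alphaForm_eq_sum (A : Fin n → Matrix (Fin n) (Fin n) ℂ) :
    ((List.finRange n).map fun k => alphaForm n (A k)).prod
      = ∑ f : Fin n → Fin n, ∑ g : Fin n → Fin n,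
          (∏ k, Complex.I * A k (f k) (g k)) • dzDzbarProd n f g := by
  simp only [alphaForm, ← Fintype.sum_prod_type', ← List.ofFn_eq_map, List.prod_ofFn_sum_smul]
  exact Fintype.sum_equiv (Equiv.arrowProdEquivProdArrow _ _ _) _ _ fun r => rfl

/-- `α(A₁) ∧ ⋯ ∧ α(Aₙ) = n! · D(A₁,…,Aₙ) · 2ⁿ · dV(ℂⁿ)`. -/
theorem wedge_alphaForm_eq_mixedDisc (A : Fin n → Matrix (Fin n) (Fin n) ℂ) :
    ((List.finRange n).map fun k => alphaForm n (A k)).prod =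
      ((n.factorial : ℂ) * mixedDisc A * 2 ^ n) • volForm n := by
  have sum_eq_zero_of_not_injective (f : Fin n → Fin n) (hf : ¬ Injective f) :
      ∑ g, (∏ k, Complex.I * A k (f k) (g k)) • dzDzbarProd n f g = 0 :=
    Finset.sum_eq_zero fun g _ => by
      rw [dzDzbarProd_eq_zero_of_not_injective_left n g hf, smul_zero]
  have sum_fun_eq_sum_perm_right (σ : Perm (Fin n)) :
      ∑ g, (∏ k, Complex.I * A k (σ k) (g k)) • dzDzbarProd n σ g
        = ∑ τ : Perm (Fin n), (∏ k, Complex.I * A k (σ k) (τ k)) • dzDzbarProd n σ τ :=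
    Fintype.sum_fun_eq_sum_perm _ fun g hg => by
      rw [dzDzbarProd_eq_zero_of_not_injective_right n σ hg, smul_zero]
  have prod_I_mul (σ τ : Perm (Fin n)) :
      ∏ k, Complex.I * A k (σ k) (τ k) = Complex.I ^ n * ∏ k, A k (σ k) (τ k) := by
    simp [Finset.prod_mul_distrib]
  rw [prod_alphaForm_eq_sum, Fintype.sum_fun_eq_sum_perm _ sum_eq_zero_of_not_injective]
  simp_rw [sum_fun_eq_sum_perm_right, dzDzbarProd_perm, prod_I_mul,
    smul_comm (_ * _ : ℂ) (_ : ℤˣ), ← smul_assoc, ← mul_smul_comm, ← Finset.sum_smul,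
    ← Finset.mul_sum, ← factorial_mul_mixedDisc, volForm_eq, smul_smul]
  congr 1
  rw [div_pow]
  field_simp

end Stmt11
end

section
/- Abstract induction form of the higher Alexandrov–Fenchel inequality: let C be a convex cone in a real vector space and suppose P : C^n → ℝ is a symmetric multilinear (under nonnegative combinations) function, taking positive values on an appropriate subcone C⁺, which satisfies P(u, v, w₃, …, wₙ)² ≥ P(u, u, w₃, …, wₙ)·P(v, v, w₃, …, wₙ) for all u, v, w₃, …, wₙ ∈ C⁺. Then for every 2 ≤ m ≤ n and all γ₁, …, γₙ ∈ C⁺, P(γ₁, …, γ_m, γ_{m+1}, …, γₙ)^m ≥ ∏_{i=1}^m P(γᵢ[m], γ_{m+1}, …, γₙ), where γᵢ[m] denotes γᵢ repeated m times. -/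
/-! By symmetry `P` is a function of the multiset of its arguments. For `u, v ∈ C⁺` and a fixed
remainder, the quadratic inequality says that `j ↦ P(u[j], v[m-j], …)` is a positive log-concave
sequence on `0, …, m`, whence `P(u[m], …) ^ (m-1) * P(v[m], …) ≤ P(u[m-1], v, …) ^ m`. Apply
this with `v = γₘ` to each `u = γᵢ`, `i < m`, multiply, and bound the right-hand side by the
induction hypothesis for `γ₁, …, γₘ₋₁` with `γₘ` moved into the remainder; an `(m-1)`-th root
gives the claim. -/

theorem List.exists_perm_comp_eq_of_perm_ofFn {α : Type*} {N : ℕ} {f g : Fin N → α}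
    (h : (List.ofFn f).Perm (List.ofFn g)) : ∃ σ : Equiv.Perm (Fin N), g ∘ σ = f := by
  classical
  let e : Fin N → Fin N := fun i =>
    Fin.cast List.length_ofFn (h.idxBij (Fin.cast List.length_ofFn.symm i))
  have he : e.Injective := by
    intro i j hij
    simpa [e, Fin.ext_iff] using h.idxBij_injective (Fin.cast_injective _ hij)
  refine ⟨Equiv.ofBijective e he.bijective_of_finite, funext fun i => ?_⟩
  have := h.getElem_idxBij_eq_getElem (Fin.cast List.length_ofFn.symm i)
  simp only [List.getElem_ofFn] at this
  exact this

theorem Multiset.exists_ofFn_eq {α : Type*} {s : Multiset α} {N : ℕ} (hs : card s = N) :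
    ∃ u : Fin N → α, (List.ofFn u : Multiset α) = s := by
  induction s using Quot.inductionOn with
  | h l =>
    subst hs
    exact ⟨l.get, by simp⟩

theorem Multiset.coe_ofFn_eq_add_drop {α : Type*} {N m : ℕ} (h : m ≤ N) (f : Fin N → α) :
    (List.ofFn f : Multiset α) =
      (List.ofFn fun i : Fin m => f (Fin.castLE h i) : Multiset α) +
        ((List.ofFn f).drop m : Multiset α) := by
  conv_lhs => rw [← List.take_append_drop m (List.ofFn f)]
  rw [← Fin.ofFn_take_eq_take_ofFn h f, ← Multiset.coe_add]
  rfl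

theorem Multiset.coe_ofFn_ite_lt {α : Type*} {N m : ℕ} (h : m ≤ N) (f : Fin N → α) (c : α) :
    (List.ofFn (fun k : Fin N => if (k : ℕ) < m then c else f k) : Multiset α) =
      replicate m c + ((List.ofFn f).drop m : Multiset α) := by
  rw [coe_ofFn_eq_add_drop h]
  congr 1
  · simp only [Fin.val_castLE, Fin.is_lt, if_true, List.ofFn_const, coe_replicate]
  · congr 1
    refine List.ext_getElem (by simp) fun i _ _ => ?_
    simp only [List.getElem_drop, List.getElem_ofFn]
    exact if_neg (by simp)

theorem Multiset.forall_mem_replicate_add {α : Type*} {S : Set α} {x : α} (hx : x ∈ S)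
    {t : Multiset α} (ht : ∀ y ∈ t, y ∈ S) (j : ℕ) : ∀ y ∈ replicate j x + t, y ∈ S := by
  intro y hy
  rcases mem_add.1 hy with hy | hy
  exacts [eq_of_mem_replicate hy ▸ hx, ht y hy]

section LogConcave

variable {b : ℕ → ℝ} {k : ℕ} (hb : ∀ j ≤ k + 1, 0 < b j)
  (hlc : ∀ j, j + 2 ≤ k + 1 → b j * b (j + 2) ≤ b (j + 1) ^ 2)
include hb hlc

theorem mul_le_mul_succ_of_logConcave {i j : ℕ} (hji : j ≤ i) (hik : i ≤ k) :
    b (i + 1) * b j ≤ b i * b (j + 1) := by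
  induction i, hji using Nat.le_induction with
  | base => rw [mul_comm]
  | succ i hji ih =>
    have h₀ : 0 < b (i + 1) := hb _ (by omega)
    refine le_of_mul_le_mul_right ?_ h₀
    calc b (i + 1 + 1) * b j * b (i + 1) = b (i + 2) * (b (i + 1) * b j) := by ring
      _ ≤ b (i + 2) * (b i * b (j + 1)) :=
        mul_le_mul_of_nonneg_left (ih (by omega)) (hb _ (by omega)).le
      _ = b i * b (i + 2) * b (j + 1) := by ring
      _ ≤ b (i + 1) ^ 2 * b (j + 1) :=
        mul_le_mul_of_nonneg_right (hlc i (by omega)) (hb _ (by omega)).le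
      _ = b (i + 1) * b (j + 1) * b (i + 1) := by ring

theorem pow_mul_le_pow_succ_of_logConcave : b (k + 1) ^ k * b 0 ≤ b k ^ (k + 1) := by
  have hpartial : ∀ i ≤ k, b (k + 1) ^ i * b 0 ≤ b k ^ i * b i := by
    intro i
    induction i with
    | zero => simp
    | succ i ih =>
      intro hi
      calc b (k + 1) ^ (i + 1) * b 0 = b (k + 1) * (b (k + 1) ^ i * b 0) := by ring
        _ ≤ b (k + 1) * (b k ^ i * b i) :=
          mul_le_mul_of_nonneg_left (ih (by omega)) (hb _ le_rfl).le
        _ = b k ^ i * (b (k + 1) * b i) := by ring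
        _ ≤ b k ^ i * (b k * b (i + 1)) :=
          mul_le_mul_of_nonneg_left (mul_le_mul_succ_of_logConcave hb hlc (by omega) le_rfl)
            (pow_nonneg (hb _ (by omega)).le _)
        _ = b k ^ (i + 1) * b (i + 1) := by ring
  simpa [pow_succ] using hpartial k le_rfl

end LogConcave

-- Only meaningful on multisets of cardinality `N`: others get truncated or padded by `default`.
noncomputable def evalMultiset {V : Type*} [Inhabited V] {N : ℕ} (P : (Fin N → V) → ℝ)
    (s : Multiset V) : ℝ :=
  P fun k => s.toList.getD k default

theorem evalMultiset_ofFn {V : Type*} [Inhabited V] {N : ℕ} {P : (Fin N → V) → ℝ}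
    {S : Set V}
    (hsymm : ∀ (σ : Equiv.Perm (Fin N)) (u : Fin N → V),
      (∀ k, u k ∈ S) → P (u ∘ σ) = P u)
    {u : Fin N → V} (hu : ∀ k, u k ∈ S) : evalMultiset P (List.ofFn u) = P u := by
  set l := (List.ofFn u : Multiset V).toList
  have hl : l.length = N := by simp [l]
  have hperm : (List.ofFn fun k : Fin N => l.getD k default).Perm (List.ofFn u) := by
    have : (List.ofFn fun k : Fin N => l.getD k default) = l :=
      List.ext_getElem (by simp [hl]) fun i _ _ => by simp [List.getD_eq_getElem?_getD, *]
    rw [this, ← Multiset.coe_eq_coe, Multiset.coe_toList]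
  obtain ⟨σ, hσ⟩ := List.exists_perm_comp_eq_of_perm_ofFn hperm
  rw [evalMultiset, ← hσ, hsymm σ u hu]

theorem prod_mul_le_pow_succ_of_pow_mul_le {m : ℕ} (hm : m ≠ 0) {a c : Fin m → ℝ}
    {aL A : ℝ}
    (ha : ∀ i, 0 ≤ a i) (haL : 0 ≤ aL) (hc : ∀ i, 0 ≤ c i) (hA : 0 ≤ A)
    (hac : ∀ i, a i ^ m * aL ≤ c i ^ (m + 1)) (hcA : ∏ i, c i ≤ A ^ m) :
    (∏ i, a i) * aL ≤ A ^ (m + 1) := by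
  refine le_of_pow_le_pow_left₀ hm (pow_nonneg hA _) ?_
  calc ((∏ i, a i) * aL) ^ m = ∏ i, (a i ^ m * aL) := by
        rw [Finset.prod_mul_distrib, Finset.prod_pow, Finset.prod_const, Finset.card_univ,
          Fintype.card_fin, mul_pow]
    _ ≤ ∏ i, c i ^ (m + 1) :=
        Finset.prod_le_prod (fun i _ => by have := ha i; positivity) fun i _ => hac i
    _ = (∏ i, c i) ^ (m + 1) := Finset.prod_pow _ _ _
    _ ≤ (A ^ m) ^ (m + 1) := pow_le_pow_left₀ (Finset.prod_nonneg fun i _ => hc i) hcA _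
    _ = (A ^ (m + 1)) ^ m := by rw [← pow_mul, ← pow_mul, mul_comm]

section QuadraticAF

open Multiset

variable {V : Type*} {Cp : Set V} {n : ℕ} {Q : Multiset V → ℝ}
  (hpos : ∀ s : Multiset V, card s = n + 2 → (∀ x ∈ s, x ∈ Cp) → 0 < Q s)
  (hAF : ∀ u ∈ Cp, ∀ v ∈ Cp, ∀ s : Multiset V, card s = n → (∀ x ∈ s, x ∈ Cp) →
    Q (u ::ₘ u ::ₘ s) * Q (v ::ₘ v ::ₘ s) ≤ Q (u ::ₘ v ::ₘ s) ^ 2)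
include hpos hAF

theorem pow_mul_le_pow_of_quadraticAF {k : ℕ} {u v : V} (hu : u ∈ Cp) (hv : v ∈ Cp)
    {t : Multiset V} (ht : card t + (k + 1) = n + 2) (htC : ∀ x ∈ t, x ∈ Cp) :
    Q (replicate (k + 1) u + t) ^ k * Q (replicate (k + 1) v + t) ≤
      Q (replicate k u + v ::ₘ t) ^ (k + 1) := by
  set b : ℕ → ℝ := fun j => Q (replicate j u + replicate (k + 1 - j) v + t)
  have hmem : ∀ i j, ∀ x ∈ replicate i u + replicate j v + t, x ∈ Cp := by
    intro i j x hx
    simp only [mem_add, mem_replicate] at hx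
    rcases hx with (⟨-, rfl⟩ | ⟨-, rfl⟩) | hx
    exacts [hu, hv, htC x hx]
  have hb : ∀ j ≤ k + 1, 0 < b j := fun j hj =>
    hpos _ (by simp only [card_add, card_replicate]; omega) (hmem _ _)
  have hlc : ∀ j, j + 2 ≤ k + 1 → b j * b (j + 2) ≤ b (j + 1) ^ 2 := by
    intro j hj
    set s := replicate j u + replicate (k - 1 - j) v + t
    have hv2 : b j = Q (v ::ₘ v ::ₘ s) := by
      simp only [b, s, show k + 1 - j = k - 1 - j + 1 + 1 by omega, replicate_succ, add_cons,
        cons_add]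
    have hu2 : b (j + 2) = Q (u ::ₘ u ::ₘ s) := by
      simp only [b, s, show k + 1 - (j + 2) = k - 1 - j by omega, replicate_succ, cons_add]
    have huv : b (j + 1) = Q (u ::ₘ v ::ₘ s) := by
      simp only [b, s, show k + 1 - (j + 1) = k - 1 - j + 1 by omega, replicate_succ, cons_add,
        add_cons, cons_swap v u]
    rw [hv2, hu2, huv, mul_comm]
    exact hAF u hu v hv s (by simp only [s, card_add, card_replicate]; omega) (hmem _ _)
  have hbu : b (k + 1) = Q (replicate (k + 1) u + t) := by simp [b]
  have hbv : b 0 = Q (replicate (k + 1) v + t) := by simp [b]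
  have hbuv : b k = Q (replicate k u + v ::ₘ t) := by
    simp [b, singleton_add, add_assoc]
  have key := pow_mul_le_pow_succ_of_logConcave hb hlc
  rwa [hbu, hbv, hbuv] at key

theorem prod_le_pow_of_quadraticAF {m : ℕ} (hm : 1 ≤ m) {g : Fin m → V}
    (hg : ∀ i, g i ∈ Cp)
    {t : Multiset V} (ht : card t + m = n + 2) (htC : ∀ x ∈ t, x ∈ Cp) :
    ∏ i, Q (replicate m (g i) + t) ≤ Q ((List.ofFn g : Multiset V) + t) ^ m := by
  induction m, hm using Nat.le_induction generalizing t with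
  | base => simp
  | succ m hm ih =>
    have hlastC : ∀ x ∈ g (Fin.last m) ::ₘ t, x ∈ Cp := by
      simpa only [mem_cons, forall_eq_or_imp] using ⟨hg _, htC⟩
    have hsplit : (List.ofFn g : Multiset V) + t =
        (List.ofFn fun i => g i.castSucc : Multiset V) + g (Fin.last m) ::ₘ t := by
      rw [List.ofFn_succ' g, List.concat_eq_append, ← coe_add, add_assoc, coe_singleton,
        singleton_add]
    have hcard : ∀ (j : ℕ) (x : V) (s : Multiset V), card s + j = n + 2 →
        card (replicate j x + s) = n + 2 := fun j x s hs => by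
      rw [card_add, card_replicate]; omega
    rw [Fin.prod_univ_castSucc]
    refine prod_mul_le_pow_succ_of_pow_mul_le (by omega)
      (fun i => (hpos _ (hcard _ _ _ ht) (forall_mem_replicate_add (hg _) htC _)).le)
      (hpos _ (hcard _ _ _ ht) (forall_mem_replicate_add (hg _) htC _)).le
      (fun i => (hpos _ (hcard _ _ _ (by rw [card_cons]; omega))
        (forall_mem_replicate_add (hg _) hlastC _)).le)
      (hpos _ (by rw [card_add, coe_card, List.length_ofFn]; omega) ?_).le
      (fun i => pow_mul_le_pow_of_quadraticAF hpos hAF (hg _) (hg _) (by omega) htC) ?_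
    · simp only [mem_add, mem_coe, List.mem_ofFn]
      rintro x (⟨i, rfl⟩ | hx)
      exacts [hg i, htC x hx]
    · rw [hsplit]
      exact ih (fun i => hg _) (by rw [card_cons]; omega) hlastC

end QuadraticAF

section SymmetricAF

open Multiset

variable {V : Type*} [Inhabited V] {C Cp : Set V} {n : ℕ} {P : (Fin (n + 2) → V) → ℝ}
  (hsub : Cp ⊆ C)
  (hsymm : ∀ (σ : Equiv.Perm (Fin (n + 2))) (u : Fin (n + 2) → V),
    (∀ k, u k ∈ C) → P (u ∘ σ) = P u)
include hsub hsymm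

theorem evalMultiset_pos (hpos : ∀ u : Fin (n + 2) → V, (∀ k, u k ∈ Cp) → 0 < P u)
    (s : Multiset V) (hs : card s = n + 2) (hsC : ∀ x ∈ s, x ∈ Cp) :
    0 < evalMultiset P s := by
  obtain ⟨u, rfl⟩ := exists_ofFn_eq hs
  have hu : ∀ k, u k ∈ Cp := fun k => hsC _ (mem_coe.2 (List.mem_ofFn.2 ⟨k, rfl⟩))
  rw [evalMultiset_ofFn hsymm fun k => hsub (hu k)]
  exact hpos u hu

theorem evalMultiset_quadraticAF
    (hAF : ∀ (w : Fin (n + 2) → V), (∀ k, w k ∈ Cp) → ∀ u ∈ Cp, ∀ v ∈ Cp,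
      P (Function.update (Function.update w 0 u) 1 u) *
          P (Function.update (Function.update w 0 v) 1 v) ≤
        (P (Function.update (Function.update w 0 u) 1 v)) ^ 2)
    (u : V) (hu : u ∈ Cp) (v : V) (hv : v ∈ Cp) (s : Multiset V) (hs : card s = n)
    (hsC : ∀ x ∈ s, x ∈ Cp) :
    evalMultiset P (u ::ₘ u ::ₘ s) * evalMultiset P (v ::ₘ v ::ₘ s) ≤
      evalMultiset P (u ::ₘ v ::ₘ s) ^ 2 := by
  obtain ⟨t, rfl⟩ := exists_ofFn_eq hs
  have ht : ∀ k, t k ∈ Cp := fun k => hsC _ (mem_coe.2 (List.mem_ofFn.2 ⟨k, rfl⟩))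
  set w : Fin (n + 2) → V := Fin.cons u (Fin.cons u t)
  have hupdate : ∀ a ∈ Cp, ∀ b ∈ Cp,
      evalMultiset P (a ::ₘ b ::ₘ (List.ofFn t : Multiset V)) =
        P (Function.update (Function.update w 0 a) 1 b) := by
    intro a ha b hb
    rw [Fin.update_cons_zero, ← Fin.succ_zero_eq_one, ← Fin.cons_update, Fin.update_cons_zero,
      ← evalMultiset_ofFn hsymm fun k => hsub (Fin.cases ha (Fin.cases hb ht) k)]
    simp [List.ofFn_succ]
  rw [hupdate u hu u hu, hupdate v hv v hv, hupdate u hu v hv]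
  exact hAF w (Fin.cases hu (Fin.cases hu ht)) u hu v hv

end SymmetricAF

theorem abstract_af_higher_general {V : Type*}
    (C Cp : Set V) (hsub : Cp ⊆ C)
    (n : ℕ) (P : (Fin (n + 2) → V) → ℝ)
    (hsymm : ∀ (σ : Equiv.Perm (Fin (n + 2))) (u : Fin (n + 2) → V),
      (∀ k, u k ∈ C) → P (u ∘ σ) = P u)
    (hpos : ∀ u : Fin (n + 2) → V, (∀ k, u k ∈ Cp) → 0 < P u)
    (hAF : ∀ (w : Fin (n + 2) → V), (∀ k, w k ∈ Cp) → ∀ u ∈ Cp, ∀ v ∈ Cp,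
      P (Function.update (Function.update w 0 u) 1 u) *
          P (Function.update (Function.update w 0 v) 1 v) ≤
        (P (Function.update (Function.update w 0 u) 1 v)) ^ 2) :
    ∀ (m : ℕ) (_ : 2 ≤ m) (hmn : m ≤ n + 2) (γ : Fin (n + 2) → V), (∀ k, γ k ∈ Cp) →
      (∏ i : Fin m, P fun k => if (k : ℕ) < m then γ (Fin.castLE hmn i) else γ k) ≤
        P γ ^ m := by
  intro m hm hmn γ hγ
  let : Inhabited V := ⟨γ 0⟩
  have hP : ∀ u : Fin (n + 2) → V, (∀ k, u k ∈ Cp) → P u = evalMultiset P (List.ofFn u) :=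
    fun u hu => (evalMultiset_ofFn hsymm fun k => hsub (hu k)).symm
  have key := prod_le_pow_of_quadraticAF (evalMultiset_pos hsub hsymm hpos)
    (evalMultiset_quadraticAF hsub hsymm hAF) (by omega) (fun i => hγ (Fin.castLE hmn i))
    (t := ((List.ofFn γ).drop m : Multiset V)) (by simp; omega) fun x hx => by
      obtain ⟨k, rfl⟩ := List.mem_ofFn.1 (List.mem_of_mem_drop hx)
      exact hγ k
  rw [← Multiset.coe_ofFn_eq_add_drop hmn, ← hP γ hγ] at key
  refine (Finset.prod_congr rfl fun i _ => ?_).trans_le key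
  rw [hP _ fun k => ?_, Multiset.coe_ofFn_ite_lt hmn]
  split_ifs
  exacts [hγ _, hγ k]

/-- abstract induction form of the higher Alexandrov–Fenchel inequality.
`P` is a symmetric function of `n` (`= n₀+2 ≥ 2`) arguments from a convex cone `C`,
multilinear under nonnegative combinations, positive when all arguments lie in a subcone
`C⁺` (closed under the cone operations), and satisfying the quadratic AF inequality in its
first two slots for arguments from `C⁺`. Then for `2 ≤ m ≤ n` and `γ₁,…,γₙ ∈ C⁺`,
`P(γ₁,…,γₙ)^m ≥ ∏_{i=1}^m P(γᵢ[m], γ_{m+1},…,γₙ)`. -/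
theorem abstract_af_higher {V : Type*} [AddCommGroup V] [Module ℝ V]
    (C Cp : Set V) (hsub : Cp ⊆ C)
    (hC_add : ∀ u ∈ C, ∀ v ∈ C, u + v ∈ C)
    (hC_smul : ∀ (a : ℝ), 0 ≤ a → ∀ u ∈ C, a • u ∈ C)
    (hCp_add : ∀ u ∈ Cp, ∀ v ∈ Cp, u + v ∈ Cp)
    (hCp_smul : ∀ (a : ℝ), 0 < a → ∀ u ∈ Cp, a • u ∈ Cp)
    (n : ℕ) (P : (Fin (n + 2) → V) → ℝ)
    (hsymm : ∀ (σ : Equiv.Perm (Fin (n + 2))) (u : Fin (n + 2) → V),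
      (∀ k, u k ∈ C) → P (u ∘ σ) = P u)
    (hmul : ∀ (u : Fin (n + 2) → V), (∀ k, u k ∈ C) → ∀ (i : Fin (n + 2)) (a b : ℝ),
      0 ≤ a → 0 ≤ b → ∀ x ∈ C, ∀ y ∈ C,
        P (Function.update u i (a • x + b • y)) =
          a * P (Function.update u i x) + b * P (Function.update u i y))
    (hpos : ∀ u : Fin (n + 2) → V, (∀ k, u k ∈ Cp) → 0 < P u)
    (hAF : ∀ (w : Fin (n + 2) → V), (∀ k, w k ∈ Cp) → ∀ u ∈ Cp, ∀ v ∈ Cp,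
      P (Function.update (Function.update w 0 u) 1 u) *
          P (Function.update (Function.update w 0 v) 1 v) ≤
        (P (Function.update (Function.update w 0 u) 1 v)) ^ 2) :
    ∀ (m : ℕ) (_ : 2 ≤ m) (hmn : m ≤ n + 2) (γ : Fin (n + 2) → V), (∀ k, γ k ∈ Cp) →
      (∏ i : Fin m, P fun k => if (k : ℕ) < m then γ (Fin.castLE hmn i) else γ k) ≤
        P γ ^ m :=
  abstract_af_higher_general C Cp hsub n P hsymm hpos hAF
end

section
/- Let a, b, c, d, e, f be real numbers with the matrix interpretation d₀₀ = a, d₀₁ = b, d₀₂ = c, d₁₁ = d, d₁₂ = e, d₂₂ = f arising as Gram-type values d_{ij} = f(uᵢ,uⱼ) of a symmetric nonnegatively-bilinear function on a cone satisfying f(u,v)² ≥ f(u,u)f(v,v). Then (d₀₁² − d₀₀d₁₁)(d₀₂² − d₀₀d₂₂) ≥ (d₀₁d₀₂ − d₀₀d₁₂)². -/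
/-!
Write `a = d₀₀, b = d₀₁, c = d₀₂, d = d₁₁, e = d₁₂, g = d₂₂` and let `P(x, y)` be the quadratic
form of the matrix `M = (d₀ᵢd₀ⱼ − d₀₀dᵢⱼ)`, so the claim is `det M ≥ 0`. By the discriminant
criterion it suffices that `P(1, y) ≥ 0` for every real `y`. For `y ≥ 0` this is the
Alexandrov–Fenchel inequality for `u₀` and `u₁ + y u₂`. For `y < 0`, the inequality for
`u₀ + ε u₁` and `u₀ − εy u₂` reads `ε² (P(1, y) + O(ε)) ≥ 0`, and letting `ε → 0⁺` gives
`P(1, y) ≥ 0`.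
-/

open Filter Topology

theorem nonneg_of_forall_pos_nonneg_add_mul_add_mul_sq {A B C : ℝ}
    (h : ∀ ε > 0, 0 ≤ A + B * ε + C * ε ^ 2) : 0 ≤ A := by
  have hlim : Tendsto (fun ε : ℝ => A + B * ε + C * ε ^ 2) (𝓝[>] 0) (𝓝 A) := by
    refine tendsto_nhdsWithin_of_tendsto_nhds ?_
    simpa using (by fun_prop : Continuous fun ε : ℝ => A + B * ε + C * ε ^ 2).tendsto 0
  exact ge_of_tendsto hlim (eventually_nhdsWithin_of_forall h)

theorem sq_le_mul_of_forall_nonneg_add_mul_add_mul_sq {p r s : ℝ}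
    (h : ∀ y, 0 ≤ p + 2 * r * y + s * y ^ 2) : r ^ 2 ≤ p * s := by
  have hdisc := discrim_le_zero (a := s) (b := 2 * r) (c := p) fun y => by linear_combination h y
  unfold discrim at hdisc
  linarith

theorem sq_mul_sub_mul_le_of_af {a b c d e g : ℝ}
    (hcop : ∀ t ≥ 0, a * (d + 2 * t * e + t ^ 2 * g) ≤ (b + t * c) ^ 2)
    (hshift : ∀ s ≥ 0, ∀ t ≥ 0,
      (a + 2 * s * b + s ^ 2 * d) * (a + 2 * t * c + t ^ 2 * g) ≤
        (a + s * b + t * c + s * t * e) ^ 2) :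
    (b * c - a * e) ^ 2 ≤ (b ^ 2 - a * d) * (c ^ 2 - a * g) := by
  refine sq_le_mul_of_forall_nonneg_add_mul_add_mul_sq fun y => ?_
  rcases le_or_gt 0 y with hy | hy
  · linear_combination hcop y hy
  · -- `hshift` at `s = ε, t = -εy`, divided by `ε²`, is `0 ≤ P(1, y) + B ε + C ε²`.
    refine nonneg_of_forall_pos_nonneg_add_mul_add_mul_sq
      (B := -2 * y * (b * e - c * d - y * (c * e - b * g))) (C := y ^ 2 * (e ^ 2 - d * g))
      fun ε hε => nonneg_of_mul_nonneg_right (a := ε ^ 2) ?_ (by positivity)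
    have := hshift ε hε.le (-(ε * y)) (by nlinarith)
    linear_combination this

section Cone

variable {V : Type*} [AddCommGroup V] [Module ℝ V] {C : Set V} {f : V → V → ℝ}

theorem af_smul_add_smul
    (hC_add : ∀ u ∈ C, ∀ v ∈ C, u + v ∈ C)
    (hC_smul : ∀ (a : ℝ), 0 ≤ a → ∀ u ∈ C, a • u ∈ C)
    (hbilin : ∀ (a₁ a₂ b₁ b₂ : ℝ), 0 ≤ a₁ → 0 ≤ a₂ → 0 ≤ b₁ → 0 ≤ b₂ →
      ∀ u₁ ∈ C, ∀ u₂ ∈ C, ∀ v₁ ∈ C, ∀ v₂ ∈ C,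
        f (a₁ • u₁ + a₂ • u₂) (b₁ • v₁ + b₂ • v₂) =
          a₁ * b₁ * f u₁ v₁ + a₁ * b₂ * f u₁ v₂ + a₂ * b₁ * f u₂ v₁ + a₂ * b₂ * f u₂ v₂)
    (hAF : ∀ u ∈ C, ∀ v ∈ C, f u u * f v v ≤ (f u v) ^ 2)
    {α₁ α₂ β₁ β₂ : ℝ} (hα₁ : 0 ≤ α₁) (hα₂ : 0 ≤ α₂) (hβ₁ : 0 ≤ β₁) (hβ₂ : 0 ≤ β₂)
    {p₁ p₂ q₁ q₂ : V} (hp₁ : p₁ ∈ C) (hp₂ : p₂ ∈ C) (hq₁ : q₁ ∈ C) (hq₂ : q₂ ∈ C) :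
    (α₁ * α₁ * f p₁ p₁ + α₁ * α₂ * f p₁ p₂ + α₂ * α₁ * f p₂ p₁ + α₂ * α₂ * f p₂ p₂) *
        (β₁ * β₁ * f q₁ q₁ + β₁ * β₂ * f q₁ q₂ + β₂ * β₁ * f q₂ q₁ + β₂ * β₂ * f q₂ q₂) ≤
      (α₁ * β₁ * f p₁ q₁ + α₁ * β₂ * f p₁ q₂ + α₂ * β₁ * f p₂ q₁ + α₂ * β₂ * f p₂ q₂) ^ 2 := by
  have hx := hC_add _ (hC_smul α₁ hα₁ p₁ hp₁) _ (hC_smul α₂ hα₂ p₂ hp₂)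
  have hy := hC_add _ (hC_smul β₁ hβ₁ q₁ hq₁) _ (hC_smul β₂ hβ₂ q₂ hq₂)
  have := hAF _ hx _ hy
  rwa [hbilin _ _ _ _ hα₁ hα₂ hα₁ hα₂ _ hp₁ _ hp₂ _ hp₁ _ hp₂,
    hbilin _ _ _ _ hβ₁ hβ₂ hβ₁ hβ₂ _ hq₁ _ hq₂ _ hq₁ _ hq₂,
    hbilin _ _ _ _ hα₁ hα₂ hβ₁ hβ₂ _ hp₁ _ hp₂ _ hq₁ _ hq₂] at this

end Cone

/-- the `r = 2` case of the determinantal generalization: for `u₀, u₁, u₂`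
in a convex cone `C` and `f` symmetric, bilinear under nonnegative combinations, and
satisfying the Alexandrov–Fenchel type inequality, with `dᵢⱼ = f(uᵢ,uⱼ)` one has
`(d₀₁² − d₀₀d₁₁)(d₀₂² − d₀₀d₂₂) ≥ (d₀₁d₀₂ − d₀₀d₁₂)²`. -/
theorem af_r_two_case {V : Type*} [AddCommGroup V] [Module ℝ V] (C : Set V)
    (hC_add : ∀ u ∈ C, ∀ v ∈ C, u + v ∈ C)
    (hC_smul : ∀ (a : ℝ), 0 ≤ a → ∀ u ∈ C, a • u ∈ C)
    (f : V → V → ℝ)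
    (hsymm : ∀ u ∈ C, ∀ v ∈ C, f u v = f v u)
    (hbilin : ∀ (a₁ a₂ b₁ b₂ : ℝ), 0 ≤ a₁ → 0 ≤ a₂ → 0 ≤ b₁ → 0 ≤ b₂ →
      ∀ u₁ ∈ C, ∀ u₂ ∈ C, ∀ v₁ ∈ C, ∀ v₂ ∈ C,
        f (a₁ • u₁ + a₂ • u₂) (b₁ • v₁ + b₂ • v₂) =
          a₁ * b₁ * f u₁ v₁ + a₁ * b₂ * f u₁ v₂ + a₂ * b₁ * f u₂ v₁ + a₂ * b₂ * f u₂ v₂)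
    (hAF : ∀ u ∈ C, ∀ v ∈ C, f u u * f v v ≤ (f u v) ^ 2)
    (u₀ u₁ u₂ : V) (h₀ : u₀ ∈ C) (h₁ : u₁ ∈ C) (h₂ : u₂ ∈ C) :
    (f u₀ u₁ * f u₀ u₂ - f u₀ u₀ * f u₁ u₂) ^ 2 ≤
      ((f u₀ u₁) ^ 2 - f u₀ u₀ * f u₁ u₁) * ((f u₀ u₂) ^ 2 - f u₀ u₀ * f u₂ u₂) := by
  refine sq_mul_sub_mul_le_of_af (fun t ht => ?_) (fun s hs t ht => ?_)
  · have := af_smul_add_smul hC_add hC_smul hbilin hAF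
      zero_le_one le_rfl zero_le_one ht h₀ h₀ h₁ h₂
    rw [hsymm u₂ h₂ u₁ h₁] at this
    linear_combination this
  · have := af_smul_add_smul hC_add hC_smul hbilin hAF
      zero_le_one hs zero_le_one ht h₀ h₁ h₀ h₂
    rw [hsymm u₁ h₁ u₀ h₀, hsymm u₂ h₂ u₀ h₀] at this
    linear_combination this
end

section
/- Abstract equality-propagation: let C⁺ be a subcone of a convex cone C and P : Cⁿ → ℝ a symmetric function, multilinear under nonnegative combinations, positive on (C⁺)ⁿ, satisfying for all u,v,w₃,…,wₙ ∈ C⁺ both the Alexandrov–Fenchel inequality P(u,v,w₃,…,wₙ)² ≥ P(u,u,w₃,…,wₙ)P(v,v,w₃,…,wₙ). Suppose moreover the m−1 case of the product inequality holds with a characterized equality condition. If γ₁,…,γₙ ∈ C⁺ satisfy P(γ₁,…,γ_m,γ_{m+1},…,γₙ)^m = ∏_{i=1}^m P(γᵢ[m],γ_{m+1},…,γₙ), then for every 1 ≤ j ≤ m equality holds in P(γ₁,…,γ_m,γ_{m+1},…,γₙ)^{m−1} = ∏_{1≤i≤m, i≠j} P(γᵢ^{m−1}γⱼ,γ_{m+1},…,γₙ)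 (with the notation γᵢ^{m−1}γⱼ meaning γᵢ repeated m−1 times and γⱼ once). -/
/-!
Write `A i = P(γᵢ[m], γ_{m+1}, …)` and `B i j = P(γᵢ^{m-1} γⱼ, γ_{m+1}, …)`. For `i ≠ j` the
quadratic Alexandrov–Fenchel inequality makes `t ↦ P(γⱼ^t γᵢ^{m-t}, γ_{m+1}, …)` log-concave, so
comparing its two ends with their neighbours gives `A i * A j ≤ B i j * B j i`. The level-`(m-1)`
inequality applied to a rearrangement of `γ` gives `∏_{i ≠ j} B i j ≤ P(γ)^{m-1}` for every `j`.
Multiplying the pair inequalities over all ordered pairs gives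
`∏_j ∏_{i ≠ j} B i j ≥ (∏ A)^{m-1} = P(γ)^{m(m-1)}`, which is the product of the `m` upper bounds,
so each of those bounds is attained.
-/

open Finset Function

theorem mul_le_mul_of_log_concave {a : ℕ → ℝ} {m : ℕ} (hpos : ∀ t ≤ m, 0 < a t)
    (hlc : ∀ t, t + 2 ≤ m → a t * a (t + 2) ≤ a (t + 1) ^ 2) :
    ∀ t, t + 1 ≤ m → a 0 * a (t + 1) ≤ a 1 * a t := by
  intro t
  induction t with
  | zero => exact fun _ => (mul_comm _ _).le
  | succ t ih =>
    intro ht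
    have h0 := hpos t (by omega)
    have h1 := hpos (t + 1) (by omega)
    refine le_of_mul_le_mul_right ?_ (mul_pos h0 h1)
    calc a 0 * a (t + 2) * (a t * a (t + 1)) = a 0 * a (t + 1) * (a t * a (t + 2)) := by ring
      _ ≤ a 1 * a t * a (t + 1) ^ 2 :=
        mul_le_mul (ih (by omega)) (hlc t (by omega)) (mul_pos h0 (hpos _ (by omega))).le
          (mul_pos (hpos 1 (by omega)) h0).le
      _ = a 1 * a (t + 1) * (a t * a (t + 1)) := by ring

theorem Finset.prod_prod_erase_comm {ι M : Type*} [Fintype ι] [DecidableEq ι] [CommMonoid M]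
    (f : ι → ι → M) :
    ∏ j, ∏ i ∈ univ.erase j, f i j = ∏ j, ∏ i ∈ univ.erase j, f j i :=
  prod_comm' fun j i => by simp [ne_comm]

theorem Finset.prod_prod_erase_const {ι M : Type*} [Fintype ι] [DecidableEq ι] [CommMonoid M]
    (g : ι → M) :
    ∏ j, ∏ _i ∈ univ.erase j, g j = (∏ j, g j) ^ (Fintype.card ι - 1) := by
  simp [prod_const, card_erase_of_mem, prod_pow]

theorem prod_erase_eq_of_mul_le_mul {ι : Type*} [Fintype ι] [DecidableEq ι]
    {A : ι → ℝ} {B : ι → ι → ℝ} {q : ℝ} (hA : ∀ i, 0 ≤ A i) (hB : ∀ i j, 0 < B i j)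
    (hle : ∀ j, ∏ i ∈ univ.erase j, B i j ≤ q)
    (hpair : ∀ i j, i ≠ j → A i * A j ≤ B i j * B j i)
    (hAq : (∏ i, A i) ^ (Fintype.card ι - 1) = q ^ Fintype.card ι) (j : ι) :
    ∏ i ∈ univ.erase j, B i j = q := by
  set T : ι → ℝ := fun j => ∏ i ∈ univ.erase j, B i j with hT
  have hTpos : ∀ j, 0 < T j := fun j => prod_pos fun i _ => hB i j
  have hsq : (q ^ Fintype.card ι) ^ 2 ≤ (∏ j, T j) ^ 2 := calc
    (q ^ Fintype.card ι) ^ 2 = ∏ j, ∏ i ∈ univ.erase j, (A i * A j) := by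
      simp only [prod_mul_distrib]
      rw [prod_prod_erase_comm fun i _ => A i, prod_prod_erase_const, hAq, sq]
    _ ≤ ∏ j, ∏ i ∈ univ.erase j, (B i j * B j i) :=
      prod_le_prod (fun j _ => prod_nonneg fun i _ => mul_nonneg (hA i) (hA j))
        fun j _ => prod_le_prod (fun i _ => mul_nonneg (hA i) (hA j))
          fun i hi => hpair i j (ne_of_mem_erase hi)
    _ = (∏ j, T j) ^ 2 := by
      simp only [prod_mul_distrib, hT]
      rw [prod_prod_erase_comm (fun i j => B j i), sq]
  have hge : q ^ Fintype.card ι ≤ ∏ j, T j :=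
    le_of_pow_le_pow_left₀ two_ne_zero (prod_pos fun j _ => hTpos j).le hsq
  by_contra hne
  have hlt : ∏ j, T j < ∏ _j : ι, q :=
    prod_lt_prod (fun j _ => hTpos j) (fun j _ => hle j)
      ⟨j, mem_univ j, lt_of_le_of_ne (hle j) hne⟩
  rw [prod_const, card_univ] at hlt
  exact hge.not_gt hlt

section

variable {V : Type*} {S : Set V} {N n : ℕ}

def IsSymmetricOn (S : Set V) (P : (Fin N → V) → ℝ) : Prop :=
  ∀ (σ : Equiv.Perm (Fin N)) (u : Fin N → V), (∀ k, u k ∈ S) → P (u ∘ σ) = P u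

def AlexandrovFenchelOn (S : Set V) (P : (Fin (n + 2) → V) → ℝ) : Prop :=
  ∀ w : Fin (n + 2) → V, (∀ k, w k ∈ S) → ∀ u ∈ S, ∀ v ∈ S,
    P (update (update w 0 u) 1 u) * P (update (update w 0 v) 1 v) ≤
      P (update (update w 0 u) 1 v) ^ 2

theorem IsSymmetricOn.mono {C : Set V} {P : (Fin N → V) → ℝ} (hP : IsSymmetricOn C P)
    (hS : S ⊆ C) : IsSymmetricOn S P :=
  fun σ u hu => hP σ u fun k => hS (hu k)

theorem update_update_mem {w : Fin N → V} (hw : ∀ k, w k ∈ S) (p q : Fin N) {x y : V}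
    (hx : x ∈ S) (hy : y ∈ S) (k : Fin N) : update (update w p x) q y k ∈ S := by
  simp only [update_apply]
  split_ifs
  exacts [hy, hx, hw k]

theorem AlexandrovFenchelOn.of_ne {P : (Fin (n + 2) → V) → ℝ} (hAF : AlexandrovFenchelOn S P)
    (hP : IsSymmetricOn S P) {w : Fin (n + 2) → V} (hw : ∀ k, w k ∈ S) {p q : Fin (n + 2)}
    (hpq : p ≠ q) {u v : V} (hu : u ∈ S) (hv : v ∈ S) :
    P (update (update w p u) q u) * P (update (update w p v) q v) ≤
      P (update (update w p u) q v) ^ 2 := by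
  obtain ⟨σ, hσ⟩ := Equiv.Perm.exists_extending_pair ![0, 1] ![p, q]
    (injective_pair_iff_ne.mpr zero_ne_one) (injective_pair_iff_ne.mpr hpq)
  have hσp : σ.symm p = 0 := σ.symm_apply_eq.mpr (hσ 0).symm
  have hσq : σ.symm q = 1 := σ.symm_apply_eq.mpr (hσ 1).symm
  have hcomp : ∀ x ∈ S, ∀ y ∈ S,
      P (update (update (w ∘ σ) 0 x) 1 y) = P (update (update w p x) q y) := by
    intro x hx y hy
    rw [← hσp, ← hσq, ← update_comp_equiv, ← update_comp_equiv]
    exact hP σ _ (update_update_mem hw p q hx hy)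
  simpa only [hcomp u hu u hu, hcomp v hv v hv, hcomp u hu v hv] using
    hAF (w ∘ σ) (fun k => hw (σ k)) u hu v hv

/-- `fillPrefix (fillPrefix γ m γⱼ) (m - 1) γᵢ` is the paper's `(γᵢ^{m-1} γⱼ, γ_{m+1}, …, γₙ)`. -/
def fillPrefix (w : Fin N → V) (s : ℕ) (x : V) : Fin N → V :=
  fun k => if (k : ℕ) < s then x else w k

theorem fillPrefix_mem {w : Fin N → V} (hw : ∀ k, w k ∈ S) (s : ℕ) {x : V} (hx : x ∈ S)
    (k : Fin N) : fillPrefix w s x k ∈ S := by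
  unfold fillPrefix
  split_ifs
  exacts [hx, hw k]

theorem fillPrefix_zero (w : Fin N → V) (x : V) : fillPrefix w 0 x = w := by
  funext k
  simp [fillPrefix]

theorem fillPrefix_fillPrefix_self (w : Fin N → V) (s : ℕ) (x y : V) :
    fillPrefix (fillPrefix w s x) s y = fillPrefix w s y := by
  funext k
  simp only [fillPrefix]
  split_ifs <;> rfl

theorem fillPrefix_one_eq_comp_swap (w : Fin N → V) {s : ℕ} (hs : s + 1 ≤ N) (x y : V) :
    fillPrefix (fillPrefix w (s + 1) x) 1 y =
      fillPrefix (fillPrefix w (s + 1) y) s x ∘ Equiv.swap ⟨0, by omega⟩ ⟨s, by omega⟩ := by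
  funext k
  simp only [fillPrefix, comp_apply, Equiv.swap_apply_def, Fin.ext_iff, apply_ite Fin.val]
  split_ifs <;> first | rfl | omega

theorem fillPrefix_log_concave {P : (Fin (n + 2) → V) → ℝ} (hAF : AlexandrovFenchelOn S P)
    (hP : IsSymmetricOn S P) {w : Fin (n + 2) → V} (hw : ∀ k, w k ∈ S) {x y : V} (hx : x ∈ S)
    (hy : y ∈ S) {m t : ℕ} (ht : t + 2 ≤ m) (hm : m ≤ n + 2) :
    P (fillPrefix (fillPrefix w m x) t y) * P (fillPrefix (fillPrefix w m x) (t + 2) y) ≤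
      P (fillPrefix (fillPrefix w m x) (t + 1) y) ^ 2 := by
  set b := fillPrefix (fillPrefix w m x) (t + 1) y
  set p : Fin (n + 2) := ⟨t, by omega⟩
  set q : Fin (n + 2) := ⟨t + 1, by omega⟩
  obtain ⟨hxx, hyy, hyx⟩ : update (update b p x) q x = fillPrefix (fillPrefix w m x) t y ∧
      update (update b p y) q y = fillPrefix (fillPrefix w m x) (t + 2) y ∧
      update (update b p y) q x = b := by
    refine ⟨?_, ?_, ?_⟩ <;> funext k <;>
      simp only [b, p, q, fillPrefix, update_apply, Fin.ext_iff] <;>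
      split_ifs <;> first | rfl | omega
  have h := hAF.of_ne hP (fillPrefix_mem (fillPrefix_mem hw m hx) (t + 1) hy)
    (p := p) (q := q) (by simp [p, q, Fin.ext_iff]) hy hx
  rwa [hxx, hyy, hyx, mul_comm] at h

theorem mul_le_mul_fillPrefix {P : (Fin (n + 2) → V) → ℝ} (hAF : AlexandrovFenchelOn S P)
    (hP : IsSymmetricOn S P) (hpos : ∀ u, (∀ k, u k ∈ S) → 0 < P u) {w : Fin (n + 2) → V}
    (hw : ∀ k, w k ∈ S) {x y : V} (hx : x ∈ S) (hy : y ∈ S) {s : ℕ} (hs : s + 1 ≤ n + 2) :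
    P (fillPrefix w (s + 1) x) * P (fillPrefix w (s + 1) y) ≤
      P (fillPrefix (fillPrefix w (s + 1) y) s x) *
        P (fillPrefix (fillPrefix w (s + 1) x) s y) := by
  have h := mul_le_mul_of_log_concave (a := fun t => P (fillPrefix (fillPrefix w (s + 1) x) t y))
    (fun t _ => hpos _ (fillPrefix_mem (fillPrefix_mem hw _ hx) t hy))
    (fun t ht => fillPrefix_log_concave hAF hP hw hx hy ht hs) s le_rfl
  rwa [fillPrefix_zero, fillPrefix_fillPrefix_self, fillPrefix_one_eq_comp_swap _ hs,
    hP _ _ (fillPrefix_mem (fillPrefix_mem hw _ hy) s hx)] at h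

theorem prod_erase_fillPrefix_le_pow {P : (Fin N → V) → ℝ} (hP : IsSymmetricOn S P) {s : ℕ}
    (hs : s + 1 ≤ N)
    (hprod : ∀ δ : Fin N → V, (∀ k, δ k ∈ S) →
      ∏ i : Fin s, P (fillPrefix δ s (δ (Fin.castLE (Nat.le_of_succ_le hs) i))) ≤ P δ ^ s)
    {γ : Fin N → V} (hγ : ∀ k, γ k ∈ S) (j : Fin (s + 1)) :
    ∏ i ∈ univ.erase j, P (fillPrefix (fillPrefix γ (s + 1) (γ (Fin.castLE hs j))) s
      (γ (Fin.castLE hs i))) ≤ P γ ^ s := by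
  -- `γ ∘ g` carries the `γ i`, `i ≠ j`, in its first `s` slots and `γ j` in slot `s`.
  let g : Fin N → Fin N := fun k => if h : (k : ℕ) < s then Fin.castLE hs (j.succAbove ⟨k, h⟩)
    else if (k : ℕ) = s then Fin.castLE hs j else k
  have hg : Injective g := by
    intro k l hkl
    simp only [g, Fin.ext_iff, apply_dite Fin.val, apply_ite Fin.val, Fin.val_castLE, Fin.succAbove,
      Fin.lt_def, Fin.val_castSucc, Fin.val_succ] at hkl ⊢
    split_ifs at hkl <;> omega
  let σ := Equiv.ofBijective g (Finite.injective_iff_bijective.mp hg)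
  have h := hprod (γ ∘ σ) fun k => hγ _
  rw [hP σ γ hγ] at h
  refine le_of_eq_of_le ?_ h
  rw [← compl_singleton, ← Fin.image_succAbove_univ,
    prod_image Fin.succAbove_right_injective.injOn]
  refine prod_congr rfl fun i _ => ?_
  congr 1
  funext k
  simp only [fillPrefix, comp_apply, σ, g, Equiv.ofBijective_apply, Fin.val_castLE, Fin.is_lt,
    dite_true, Fin.eta]
  split_ifs <;> first | rfl | (congr 1; ext; simp only [Fin.val_castLE]; omega)

end

theorem abstract_af_equality_propagation_general {V : Type*}
    (C Cp : Set V) (hsub : Cp ⊆ C)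
    (n : ℕ) (P : (Fin (n + 2) → V) → ℝ)
    (hsymm : ∀ (σ : Equiv.Perm (Fin (n + 2))) (u : Fin (n + 2) → V),
      (∀ k, u k ∈ C) → P (u ∘ σ) = P u)
    (hpos : ∀ u : Fin (n + 2) → V, (∀ k, u k ∈ Cp) → 0 < P u)
    (hAF : ∀ (w : Fin (n + 2) → V), (∀ k, w k ∈ Cp) → ∀ u ∈ Cp, ∀ v ∈ Cp,
      P (Function.update (Function.update w 0 u) 1 u) *
          P (Function.update (Function.update w 0 v) 1 v) ≤
        (P (Function.update (Function.update w 0 u) 1 v)) ^ 2)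
    (m : ℕ) (hmn : m ≤ n + 2)
    -- the level-(m−1) product inequality (induction hypothesis)
    (hInd : ∀ δ : Fin (n + 2) → V, (∀ k, δ k ∈ Cp) →
      (∏ i : Fin (m - 1), P fun k =>
        if (k : ℕ) < m - 1 then δ (Fin.castLE ((Nat.sub_le m 1).trans hmn) i) else δ k) ≤
        P δ ^ (m - 1))
    (γ : Fin (n + 2) → V) (hγ : ∀ k, γ k ∈ Cp)
    -- the level-m product equality
    (heq : P γ ^ m =
      ∏ i : Fin m, P fun k => if (k : ℕ) < m then γ (Fin.castLE hmn i) else γ k) :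
    ∀ j : Fin m,
      P γ ^ (m - 1) =
        ∏ i ∈ Finset.univ.filter (fun i : Fin m => i ≠ j),
          P fun k =>
            if (k : ℕ) < m - 1 then γ (Fin.castLE hmn i)
            else if (k : ℕ) = m - 1 then γ (Fin.castLE hmn j)
            else γ k := by
  intro j
  obtain ⟨s, rfl⟩ := Nat.exists_eq_add_one_of_ne_zero j.pos.ne'
  have hS : IsSymmetricOn Cp P := IsSymmetricOn.mono hsymm hsub
  have hB : ∀ i l : Fin (s + 1), (P fun k : Fin (n + 2) =>
      if (k : ℕ) < s then γ (Fin.castLE hmn i)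
      else if (k : ℕ) = s then γ (Fin.castLE hmn l) else γ k) =
      P (fillPrefix (fillPrefix γ (s + 1) (γ (Fin.castLE hmn l))) s (γ (Fin.castLE hmn i))) := by
    intro i l
    congr 1
    funext k
    simp only [fillPrefix]
    split_ifs <;> first | rfl | omega
  have hAq : (∏ i : Fin (s + 1), P (fillPrefix γ (s + 1) (γ (Fin.castLE hmn i)))) ^
      (Fintype.card (Fin (s + 1)) - 1) = (P γ ^ s) ^ Fintype.card (Fin (s + 1)) := by
    rw [Fintype.card_fin, Nat.add_sub_cancel, ← pow_mul, mul_comm, pow_mul, heq]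
    rfl
  rw [filter_ne', Nat.add_sub_cancel]
  simp only [hB]
  exact (prod_erase_eq_of_mul_le_mul (fun i => (hpos _ (fillPrefix_mem hγ _ (hγ _))).le)
    (fun i j => hpos _ (fillPrefix_mem (fillPrefix_mem hγ _ (hγ _)) _ (hγ _)))
    (prod_erase_fillPrefix_le_pow hS hmn hInd hγ)
    (fun i j _ => mul_le_mul_fillPrefix hAF hS hpos hγ (hγ _) (hγ _) hmn) hAq j).symm

/-- abstract equality-propagation in the induction proving the higher
Alexandrov–Fenchel inequality. `P` is symmetric, multilinear under nonnegative
combinations, positive on the subcone `C⁺`, and satisfies the quadratic AF inequality;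
moreover the level-`(m−1)` product inequality (the induction hypothesis, whose equality
case is characterized) is assumed. If `γ₁,…,γₙ ∈ C⁺` satisfy the level-`m` product
equality `P(γ)^m = ∏_{i=1}^m P(γᵢ[m], γ_{m+1},…,γₙ)`, then for every `1 ≤ j ≤ m` equality
holds in inequality (13):
`P(γ)^{m−1} = ∏_{1≤i≤m, i≠j} P(γᵢ^{m−1}γⱼ, γ_{m+1},…,γₙ)`. -/
theorem abstract_af_equality_propagation {V : Type*} [AddCommGroup V] [Module ℝ V]
    (C Cp : Set V) (hsub : Cp ⊆ C)
    (hC_add : ∀ u ∈ C, ∀ v ∈ C, u + v ∈ C)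
    (hC_smul : ∀ (a : ℝ), 0 ≤ a → ∀ u ∈ C, a • u ∈ C)
    (hCp_add : ∀ u ∈ Cp, ∀ v ∈ Cp, u + v ∈ Cp)
    (hCp_smul : ∀ (a : ℝ), 0 < a → ∀ u ∈ Cp, a • u ∈ Cp)
    (n : ℕ) (P : (Fin (n + 2) → V) → ℝ)
    (hsymm : ∀ (σ : Equiv.Perm (Fin (n + 2))) (u : Fin (n + 2) → V),
      (∀ k, u k ∈ C) → P (u ∘ σ) = P u)
    (hmul : ∀ (u : Fin (n + 2) → V), (∀ k, u k ∈ C) → ∀ (i : Fin (n + 2)) (a b : ℝ),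
      0 ≤ a → 0 ≤ b → ∀ x ∈ C, ∀ y ∈ C,
        P (Function.update u i (a • x + b • y)) =
          a * P (Function.update u i x) + b * P (Function.update u i y))
    (hpos : ∀ u : Fin (n + 2) → V, (∀ k, u k ∈ Cp) → 0 < P u)
    (hAF : ∀ (w : Fin (n + 2) → V), (∀ k, w k ∈ Cp) → ∀ u ∈ Cp, ∀ v ∈ Cp,
      P (Function.update (Function.update w 0 u) 1 u) *
          P (Function.update (Function.update w 0 v) 1 v) ≤
        (P (Function.update (Function.update w 0 u) 1 v)) ^ 2)
    (m : ℕ) (hm : 2 ≤ m) (hmn : m ≤ n + 2)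
    -- the level-(m−1) product inequality (induction hypothesis)
    (hInd : ∀ δ : Fin (n + 2) → V, (∀ k, δ k ∈ Cp) →
      (∏ i : Fin (m - 1), P fun k =>
        if (k : ℕ) < m - 1 then δ (Fin.castLE ((Nat.sub_le m 1).trans hmn) i) else δ k) ≤
        P δ ^ (m - 1))
    (γ : Fin (n + 2) → V) (hγ : ∀ k, γ k ∈ Cp)
    -- the level-m product equality
    (heq : P γ ^ m =
      ∏ i : Fin m, P fun k => if (k : ℕ) < m then γ (Fin.castLE hmn i) else γ k) :
    ∀ j : Fin m,
      P γ ^ (m - 1) =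
        ∏ i ∈ Finset.univ.filter (fun i : Fin m => i ≠ j),
          P fun k =>
            if (k : ℕ) < m - 1 then γ (Fin.castLE hmn i)
            else if (k : ℕ) = m - 1 then γ (Fin.castLE hmn j)
            else γ k :=
  abstract_af_equality_propagation_general C Cp hsub n P hsymm hpos hAF m hmn hInd γ hγ heq
end
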